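/- arXiv:0902.4529 — 8 statements merged into one kernel-verified Lean document; each statement's English description precedes it below -/
import Mathlib

section
/- Every commutative local ℂ-algebra R with dim_ℂ R = 5, dim_ℂ 𝔪_R² = 2 and dim_ℂ 𝔪_R³ = 1 (where 𝔪_R is the maximal ideal) is isomorphic as a ℂ-algebra either to R₂ = ℂ[S₁,S₂,S₃,S₄]/(S₁²−S₃, S₁S₂, S₂², S₁S₃−S₄, S₁S₄) or to R₃′ = ℂ[S₁,S₂,S₃,S₄]/(S₁²−S₃, S₁S₂, S₂²−S₄, S₁S₃−S₄, S₂S₃, S₁S₄). -/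
open MvPolynomial

/-- The ideal defining `R₂ = ℂ[S₁,S₂,S₃,S₄]/(S₁²−S₃, S₁S₂, S₂², S₁S₃−S₄, S₁S₄)`. -/
noncomputable def I2 : Ideal (MvPolynomial (Fin 4) ℂ) :=
  Ideal.span {X 0 ^ 2 - X 2, X 0 * X 1, X 1 ^ 2, X 0 * X 2 - X 3, X 0 * X 3}

/-- The algebra `R₂`. -/
noncomputable abbrev R2 : Type := MvPolynomial (Fin 4) ℂ ⧸ I2

/-- The ideal defining `R₃′ = ℂ[S₁,S₂,S₃,S₄]/(S₁²−S₃, S₁S₂, S₂²−S₄, S₁S₃−S₄, S₂S₃, S₁S₄)`. -/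
noncomputable def I3' : Ideal (MvPolynomial (Fin 4) ℂ) :=
  Ideal.span {X 0 ^ 2 - X 2, X 0 * X 1, X 1 ^ 2 - X 3, X 0 * X 2 - X 3, X 1 * X 2, X 0 * X 3}

/-- The algebra `R₃′`. -/
noncomputable abbrev R3' : Type := MvPolynomial (Fin 4) ℂ ⧸ I3'

/-!
Since the residue field is `ℂ`, `𝔪` has dimension 4, and `dim 𝔪³ = 1` forces `𝔪⁴ = 0` by
Nakayama. In characteristic 0 the cubes of elements of `𝔪` generate `𝔪³` (polarization), so some
`x ∈ 𝔪` has `x³ ≠ 0`, and then `x², x³` is a basis of `𝔪²`. An element `y ∈ 𝔪` outside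
`span {x, x², x³}` can be corrected by a combination of `x` and `x²` so that `x y = 0`; then `y²`
lies in `𝔪²` and is killed by `x`, so `y² = d x³`, and rescaling `y` makes `d ∈ {0, 1}`.
Now `1, x, y, x², x³` is a basis of `R`, the relations of `R₂` (`d = 0`) or `R₃′` (`d = 1`) hold
for `(x, y, x², x³)`, and the presented algebra, being spanned by the images of the same five
monomials, maps bijectively onto `R`.
-/

open Submodule Module IsLocalRing

theorem Ideal.pow_three_eq_bot_of_forall_pow_three_eq_zero {R : Type*} [CommRing R]
    (h6 : IsUnit (6 : R)) {I : Ideal R} (hI : ∀ x ∈ I, x ^ 3 = 0) : I ^ 3 = ⊥ := by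
  have hprod : ∀ a ∈ I, ∀ b ∈ I, ∀ c ∈ I, a * b * c = 0 := by
    intro a ha b hb c hc
    refine h6.mul_right_eq_zero.1 ?_
    -- 6abc = (a+b+c)³ - (a+b)³ - (a+c)³ - (b+c)³ + a³ + b³ + c³
    linear_combination hI _ (add_mem (add_mem ha hb) hc) - hI _ (add_mem ha hb)
      - hI _ (add_mem ha hc) - hI _ (add_mem hb hc) + hI a ha + hI b hb + hI c hc
  rw [eq_bot_iff, pow_succ, sq, Ideal.mul_le]
  intro r hr c hc
  exact Submodule.mul_induction_on hr (fun a ha b hb => hprod a ha b hb c hc)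
    fun u v hu hv => by rw [Ideal.mem_bot] at *; rw [add_mul, hu, hv, add_zero]

section Powers
variable {k A : Type*} [Field k] [Ring A] [Algebra k A] {x : A}

theorem linearIndependent_sq_pow_three (hx3 : x ^ 3 ≠ 0) (hx4 : x ^ 4 = 0) :
    LinearIndependent k ![x ^ 2, x ^ 3] := by
  refine LinearIndependent.pair_iff.2 fun s t hst => ?_
  have hs : s • x ^ 3 = 0 := by
    simpa [mul_add, ← pow_succ', hx4] using congrArg (x * ·) hst
  have hs0 := (smul_eq_zero.1 hs).resolve_right hx3
  rw [hs0, zero_smul, zero_add] at hst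
  exact ⟨hs0, (smul_eq_zero.1 hst).resolve_right hx3⟩

theorem linearIndependent_self_sq_pow_three (hx3 : x ^ 3 ≠ 0) (hx4 : x ^ 4 = 0) :
    LinearIndependent k ![x, x ^ 2, x ^ 3] := by
  refine linearIndependent_finCons.2 ⟨linearIndependent_sq_pow_three hx3 hx4, fun hx => hx3 ?_⟩
  rw [Matrix.range_cons_cons_empty] at hx
  obtain ⟨s, t, hst⟩ := mem_span_pair.1 hx
  have hx5 : x ^ 5 = 0 := by rw [pow_succ, hx4, zero_mul]
  calc x ^ 3 = x ^ 2 * (s • x ^ 2 + t • x ^ 3) := by rw [hst, pow_succ]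
    _ = 0 := by rw [mul_add, mul_smul_comm, mul_smul_comm, ← pow_add, ← pow_add, hx4, hx5,
      smul_zero, smul_zero, add_zero]

end Powers

section Generation
variable {k A : Type*} [CommRing k] [CommRing A] [Algebra k A]

theorem Submodule.eq_top_of_one_mem_of_mul_mem {s : Set A} (hs : Algebra.adjoin k s = ⊤)
    {V : Submodule k A} (h1 : 1 ∈ V) (hmul : ∀ a ∈ s, ∀ v ∈ V, a * v ∈ V) : V = ⊤ := by
  have key : ∀ r ∈ Algebra.adjoin k s, ∀ v ∈ V, r * v ∈ V := by
    intro r hr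
    induction hr using Algebra.adjoin_induction with
    | mem a ha => exact hmul a ha
    | algebraMap c => exact fun v hv => by rw [← Algebra.smul_def]; exact smul_mem V c hv
    | add x y _ _ hx hy => exact fun v hv => by rw [add_mul]; exact add_mem (hx v hv) (hy v hv)
    | mul x y _ _ hx hy => exact fun v hv => by rw [mul_assoc]; exact hx _ (hy v hv)
  exact eq_top_iff.2 fun r _ => mul_one r ▸ key r (hs ▸ Algebra.mem_top) 1 h1

theorem span_one_pow_eq_top_of_adjoin_eq_top {a b : A} (hs : Algebra.adjoin k {a, b} = ⊤)
    (ε : k) (hab : a * b = 0) (ha : a ^ 4 = 0) (hb : b ^ 2 = ε • a ^ 3) :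
    span k {1, a, b, a ^ 2, a ^ 3} = ⊤ := by
  set V := span k {1, a, b, a ^ 2, a ^ 3}
  have hV : ∀ v ∈ ({1, a, b, a ^ 2, a ^ 3} : Set A), v ∈ V := fun v hv => subset_span hv
  simp only [Set.mem_insert_iff, Set.mem_singleton_iff, forall_eq_or_imp, forall_eq] at hV
  obtain ⟨h1, ha1, hb1, ha2, ha3⟩ := hV
  have haa : a * a = a ^ 2 := by ring
  have haa2 : a * a ^ 2 = a ^ 3 := by ring
  have haa3 : a * a ^ 3 = 0 := by linear_combination ha
  have hba : b * a = 0 := by linear_combination hab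
  have hbb : b * b = ε • a ^ 3 := by linear_combination hb
  have hba2 : b * a ^ 2 = 0 := by linear_combination a * hab
  have hba3 : b * a ^ 3 = 0 := by linear_combination a ^ 2 * hab
  refine eq_top_of_one_mem_of_mul_mem hs h1 ?_
  rintro c hc v hv
  induction hv using Submodule.span_induction with
  | mem v hv =>
    simp only [Set.mem_insert_iff, Set.mem_singleton_iff] at hc hv
    rcases hc with hc | hc <;> rcases hv with hv | hv | hv | hv | hv <;>
      simp only [hc, hv, mul_one, haa, haa2, haa3, hab, hba, hbb, hba2, hba3, zero_mem,
        smul_mem V ε ha3, ha1, hb1, ha2, ha3]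
  | zero => simp
  | add u w _ _ hu hw => rw [mul_add]; exact add_mem hu hw
  | smul r u _ hu => rw [mul_smul_comm]; exact smul_mem _ r hu

end Generation

namespace IsLocalRing

theorem maximalIdeal_pow_succ_lt {R : Type*} [CommRing R] [IsLocalRing R] [IsNoetherianRing R]
    {n : ℕ} (h : maximalIdeal R ^ n ≠ ⊥) : maximalIdeal R ^ (n + 1) < maximalIdeal R ^ n := by
  refine lt_of_le_of_ne (Ideal.pow_le_pow_right n.le_succ) fun heq => h ?_
  refine Submodule.eq_bot_of_le_smul_of_le_jacobson_bot _ _ (IsNoetherian.noetherian _) ?_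
    (maximalIdeal_le_jacobson _)
  rw [Ideal.smul_eq_mul, ← pow_succ', heq]

variable {k R : Type*} [Field k] [CommRing R] [IsLocalRing R] [Algebra k R]

theorem maximalIdeal_pow_succ_eq_bot_of_finrank_eq_one [Module.Finite k R] {n : ℕ}
    (h : finrank k ((maximalIdeal R ^ n).restrictScalars k) = 1) :
    maximalIdeal R ^ (n + 1) = ⊥ := by
  have := IsNoetherianRing.of_finite k R
  have hne : maximalIdeal R ^ n ≠ ⊥ := by
    rintro hbot
    rw [hbot, restrictScalars_bot, finrank_bot] at h
    exact zero_ne_one h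
  have hlt := Submodule.finrank_lt_finrank_of_lt (K := k)
    ((restrictScalars_lt k).2 (maximalIdeal_pow_succ_lt hne))
  rw [h, Nat.lt_one_iff, Submodule.finrank_eq_zero] at hlt
  exact restrictScalars_injective k _ _ (hlt.trans (restrictScalars_bot k R R).symm)

theorem finrank_le_finrank_maximalIdeal_add_one [Module.Finite k R] [IsAlgClosed k] :
    finrank k R ≤ finrank k ((maximalIdeal R).restrictScalars k) + 1 := by
  have hres : ∀ r : R, ∃ c : k, r - algebraMap k R c ∈ maximalIdeal R := by
    intro r
    obtain ⟨c, hc⟩ := (IsAlgClosed.algebraMap_bijective_of_isIntegral (k := k)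
      (K := ResidueField R)).2 (residue R r)
    refine ⟨c, (residue_eq_zero_iff _).1 ?_⟩
    rw [map_sub, ← hc, IsScalarTower.algebraMap_apply k R (ResidueField R), sub_eq_zero]
    rfl
  have hsup : (maximalIdeal R).restrictScalars k ⊔ span k {1} = ⊤ := by
    refine eq_top_iff.2 fun r _ => ?_
    obtain ⟨c, hc⟩ := hres r
    rw [← sub_add_cancel r (algebraMap k R c)]
    refine add_mem (mem_sup_left hc) (mem_sup_right ?_)
    rw [Algebra.algebraMap_eq_smul_one]
    exact smul_mem _ c (mem_span_singleton_self _)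
  calc finrank k R = finrank k (⊤ : Submodule k R) := (finrank_top k R).symm
    _ ≤ _ := hsup ▸ Submodule.finrank_add_le_finrank_add_finrank _ _
    _ ≤ _ := by rw [finrank_span_singleton one_ne_zero]

variable {x : R}

theorem restrictScalars_maximalIdeal_sq_eq_span [Module.Finite k R] (hx : x ∈ maximalIdeal R)
    (hx3 : x ^ 3 ≠ 0) (hx4 : x ^ 4 = 0)
    (h2 : finrank k ((maximalIdeal R ^ 2).restrictScalars k) = 2) :
    (maximalIdeal R ^ 2).restrictScalars k = span k {x ^ 2, x ^ 3} := by
  refine (eq_of_le_of_finrank_le (span_le.2 ?_) ?_).symm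
  · have hx2 : x ^ 2 ∈ maximalIdeal R ^ 2 := Ideal.pow_mem_pow hx 2
    simp only [Set.insert_subset_iff, Set.singleton_subset_iff, SetLike.mem_coe,
      restrictScalars_mem]
    exact ⟨hx2, pow_succ x 2 ▸ Ideal.mul_mem_right x _ hx2⟩
  · have := finrank_span_eq_card (linearIndependent_sq_pow_three (k := k) hx3 hx4)
    rw [Matrix.range_cons_cons_empty, Fintype.card_fin] at this
    rw [h2, this]

theorem exists_mul_eq_zero_of_notMem_span (hx : x ∈ maximalIdeal R) (hx3 : x ^ 3 ≠ 0)
    (hx4 : x ^ 4 = 0) (hm2 : (maximalIdeal R ^ 2).restrictScalars k = span k {x ^ 2, x ^ 3})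
    {y₀ : R} (hy₀ : y₀ ∈ maximalIdeal R) (hy₀_notMem : y₀ ∉ span k {x, x ^ 2, x ^ 3}) :
    ∃ y ∈ maximalIdeal R, y ∉ span k {x, x ^ 2, x ^ 3} ∧ x * y = 0 ∧
      ∃ d : k, y ^ 2 = d • x ^ 3 := by
  have mem_sq : ∀ {a b : R}, a ∈ maximalIdeal R → b ∈ maximalIdeal R →
      ∃ s t : k, s • x ^ 2 + t • x ^ 3 = a * b := fun ha hb =>
    mem_span_pair.1 (hm2 ▸ sq (maximalIdeal R) ▸ Ideal.mul_mem_mul ha hb)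
  obtain ⟨s, t, hst⟩ := mem_sq hx hy₀
  set y := y₀ - s • x - t • x ^ 2
  have hy : y ∈ maximalIdeal R := sub_mem (sub_mem hy₀ (smul_of_tower_mem _ s hx))
    (smul_of_tower_mem _ t (Ideal.pow_mem_of_mem _ hx 2 two_pos))
  have hy_notMem : y ∉ span k {x, x ^ 2, x ^ 3} := fun h => hy₀_notMem <| by
    rw [show y₀ = y + s • x + t • x ^ 2 by simp only [y]; abel]
    exact add_mem (add_mem h (smul_mem _ s (subset_span (by simp))))
      (smul_mem _ t (subset_span (by simp)))
  have hxy : x * y = 0 := by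
    simp only [y, Algebra.smul_def] at hst ⊢
    linear_combination -hst
  obtain ⟨a, d, had⟩ := mem_sq hy hy
  have ha : a • x ^ 3 = 0 := by
    have := congrArg (x * ·) had
    simp only [mul_add, mul_smul_comm, ← pow_succ', hx4, smul_zero, add_zero] at this
    rw [this, ← mul_assoc, hxy, zero_mul]
  rw [(smul_eq_zero.1 ha).resolve_right hx3, zero_smul, zero_add, ← sq] at had
  exact ⟨y, hy, hy_notMem, hxy, d, had.symm⟩

theorem span_one_pow_eq_top_of_notMem_span [Module.Finite k R] (hx : x ∈ maximalIdeal R)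
    (hx3 : x ^ 3 ≠ 0) (hx4 : x ^ 4 = 0) {y : R} (hy : y ∈ maximalIdeal R)
    (hy_notMem : y ∉ span k {x, x ^ 2, x ^ 3}) (h5 : finrank k R = 5) :
    span k {1, x, y, x ^ 2, x ^ 3} = ⊤ := by
  have hm : span k {y, x, x ^ 2, x ^ 3} ≤ (maximalIdeal R).restrictScalars k := by
    simp only [span_le, Set.insert_subset_iff, Set.singleton_subset_iff, SetLike.mem_coe,
      restrictScalars_mem]
    exact ⟨hy, hx, Ideal.pow_mem_of_mem _ hx 2 two_pos, Ideal.pow_mem_of_mem _ hx 3 three_pos⟩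
  have hli : LinearIndependent k ![1, y, x, x ^ 2, x ^ 3] := by
    refine linearIndependent_finCons.2
      ⟨linearIndependent_finCons.2 ⟨linearIndependent_self_sq_pow_three hx3 hx4, ?_⟩, ?_⟩
    · simpa only [Matrix.range_cons, Matrix.range_empty, Set.union_empty, Set.singleton_union]
        using hy_notMem
    · simp only [Matrix.range_cons, Matrix.range_empty, Set.union_empty, Set.singleton_union]
      exact fun h1 => (maximalIdeal.isMaximal R).ne_top ((Ideal.eq_top_iff_one _).2 (hm h1))
  have := hli.span_eq_top_of_card_eq_finrank' (by simp [h5])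
  simp only [Matrix.range_cons, Matrix.range_empty, Set.union_empty, Set.singleton_union] at this
  rwa [Set.insert_comm y x] at this

theorem exists_normal_form [Module.Finite k R] [IsAlgClosed k] [CharZero k]
    (h5 : finrank k R = 5) (h2 : finrank k ((maximalIdeal R ^ 2).restrictScalars k) = 2)
    (h3 : finrank k ((maximalIdeal R ^ 3).restrictScalars k) = 1) :
    ∃ x y : R, x ^ 4 = 0 ∧ x * y = 0 ∧ (y ^ 2 = 0 ∨ y ^ 2 = x ^ 3) ∧
      span k {1, x, y, x ^ 2, x ^ 3} = ⊤ := by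
  obtain ⟨x, hx, hx3⟩ : ∃ x ∈ maximalIdeal R, x ^ 3 ≠ 0 := by
    by_contra! h
    have h6 := (IsUnit.mk0 (6 : k) (by norm_num)).map (algebraMap k R)
    rw [map_ofNat] at h6
    rw [Ideal.pow_three_eq_bot_of_forall_pow_three_eq_zero h6 h, restrictScalars_bot,
      finrank_bot] at h3
    exact zero_ne_one h3
  have hx4 : x ^ 4 = 0 := Ideal.mem_bot.1 <|
    maximalIdeal_pow_succ_eq_bot_of_finrank_eq_one h3 ▸ Ideal.pow_mem_pow hx 4
  obtain ⟨y₀, hy₀, hy₀_notMem⟩ : ∃ y₀ ∈ maximalIdeal R, y₀ ∉ span k {x, x ^ 2, x ^ 3} := by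
    by_contra! h
    have hle := Submodule.finrank_mono (show (maximalIdeal R).restrictScalars k ≤
      span k {x, x ^ 2, x ^ 3} from h)
    have hW := finrank_span_eq_card (linearIndependent_self_sq_pow_three (k := k) hx3 hx4)
    rw [Matrix.range_cons, Matrix.range_cons_cons_empty, Set.singleton_union,
      Fintype.card_fin] at hW
    have := finrank_le_finrank_maximalIdeal_add_one (k := k) (R := R)
    omega
  obtain ⟨y, hy, hy_notMem, hxy, d, hd⟩ := exists_mul_eq_zero_of_notMem_span hx hx3 hx4
    (restrictScalars_maximalIdeal_sq_eq_span hx hx3 hx4 h2) hy₀ hy₀_notMem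
  rcases eq_or_ne d 0 with rfl | hd0
  · exact ⟨x, y, hx4, hxy, .inl (by rw [hd, zero_smul]),
      span_one_pow_eq_top_of_notMem_span hx hx3 hx4 hy hy_notMem h5⟩
  · obtain ⟨e, he⟩ := IsAlgClosed.exists_pow_nat_eq d⁻¹ two_pos
    have he0 : e ≠ 0 := by rintro rfl; exact hd0 (by simpa using he.symm)
    refine ⟨x, e • y, hx4, by rw [mul_smul_comm, hxy, smul_zero], .inr ?_,
      span_one_pow_eq_top_of_notMem_span hx hx3 hx4 (smul_of_tower_mem _ e hy) ?_ h5⟩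
    · rw [smul_pow, hd, smul_smul, he, inv_mul_cancel₀ hd0, one_smul]
    · rwa [smul_mem_iff _ he0]

end IsLocalRing

namespace MvPolynomial

variable {k : Type*} [Field k]

theorem adjoin_mk_X_zero_X_one_eq_top (I : Ideal (MvPolynomial (Fin 4) k))
    (h2 : Ideal.Quotient.mk I (X 2) = Ideal.Quotient.mk I (X 0) ^ 2)
    (h3 : Ideal.Quotient.mk I (X 3) = Ideal.Quotient.mk I (X 0) ^ 3) :
    Algebra.adjoin k {Ideal.Quotient.mk I (X 0), Ideal.Quotient.mk I (X 1)} = ⊤ := by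
  set S := Algebra.adjoin k {Ideal.Quotient.mk I (X 0), Ideal.Quotient.mk I (X 1)}
  have hX0 : Ideal.Quotient.mk I (X 0) ∈ S := Algebra.subset_adjoin (by simp)
  have hX : ∀ i, Ideal.Quotient.mk I (X i) ∈ S := by
    intro i
    fin_cases i
    · exact hX0
    · exact Algebra.subset_adjoin (by simp)
    · exact h2 ▸ pow_mem hX0 2
    · exact h3 ▸ pow_mem hX0 3
  rw [eq_top_iff]
  rintro z -
  obtain ⟨p, rfl⟩ := Ideal.Quotient.mk_surjective z
  induction p using MvPolynomial.induction_on with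
  | C a => exact algebraMap_mem S a
  | add p q hp hq => rw [map_add]; exact add_mem hp hq
  | mul_X p i hp => rw [map_mul]; exact mul_mem hp (hX i)

theorem nonempty_algEquiv_quotient {R : Type*} [CommRing R] [Algebra k R]
    (I : Ideal (MvPolynomial (Fin 4) k))
    (hQ : span k {1, Ideal.Quotient.mk I (X 0), Ideal.Quotient.mk I (X 1),
      Ideal.Quotient.mk I (X 0) ^ 2, Ideal.Quotient.mk I (X 0) ^ 3} = ⊤)
    (x y : R) (hker : I ≤ RingHom.ker (aeval ![x, y, x ^ 2, x ^ 3]))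
    (hR : span k {1, x, y, x ^ 2, x ^ 3} = ⊤) (h5 : finrank k R = 5) :
    Nonempty (R ≃ₐ[k] MvPolynomial (Fin 4) k ⧸ I) := by
  classical
  have : Module.Finite k R := FiniteDimensional.of_finrank_eq_succ h5
  let φ := Ideal.Quotient.liftₐ I (aeval ![x, y, x ^ 2, x ^ 3]) fun _ hp => hker hp
  have hφ : ∀ p, φ (Ideal.Quotient.mk I p) = aeval ![x, y, x ^ 2, x ^ 3] p := fun _ => rfl
  have hsurj : Function.Surjective φ.toLinearMap := by
    rw [← LinearMap.range_eq_top, LinearMap.range_eq_map, ← hQ, map_span]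
    simpa [Set.image_insert_eq, hφ] using hR
  set s : Finset (MvPolynomial (Fin 4) k ⧸ I) := {1, Ideal.Quotient.mk I (X 0),
    Ideal.Quotient.mk I (X 1), Ideal.Quotient.mk I (X 0) ^ 2, Ideal.Quotient.mk I (X 0) ^ 3}
  have hs : span k (s : Set (MvPolynomial (Fin 4) k ⧸ I)) = ⊤ := by simpa [s] using hQ
  have : Module.Finite k (MvPolynomial (Fin 4) k ⧸ I) := Module.finite_def.2 ⟨s, hs⟩
  have hdim : finrank k (MvPolynomial (Fin 4) k ⧸ I) ≤ finrank k R := by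
    have h1 := finrank_span_finset_le_card (R := k) s
    rw [Set.finrank, hs, finrank_top] at h1
    exact h5 ▸ h1.trans Finset.card_le_five
  have hbij : Function.Bijective φ :=
    OrzechProperty.bijective_of_surjective_of_finrank_le φ.toLinearMap hsurj hdim
  exact ⟨(AlgEquiv.ofBijective φ hbij).symm⟩

end MvPolynomial

theorem I2_span_eq_top : span ℂ {1, Ideal.Quotient.mk I2 (X 0), Ideal.Quotient.mk I2 (X 1),
    Ideal.Quotient.mk I2 (X 0) ^ 2, Ideal.Quotient.mk I2 (X 0) ^ 3} = ⊤ := by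
  have rel : ∀ p ∈ ({X 0 ^ 2 - X 2, X 0 * X 1, X 1 ^ 2, X 0 * X 2 - X 3, X 0 * X 3} :
      Set (MvPolynomial (Fin 4) ℂ)), Ideal.Quotient.mk I2 p = 0 :=
    fun p hp => Ideal.Quotient.eq_zero_iff_mem.2 (Ideal.subset_span hp)
  simp only [Set.mem_insert_iff, Set.mem_singleton_iff, forall_eq_or_imp, forall_eq, map_sub,
    map_mul, map_pow] at rel
  obtain ⟨r1, r2, r3, r4, r5⟩ := rel
  set a := Ideal.Quotient.mk I2 (X 0)
  refine span_one_pow_eq_top_of_adjoin_eq_top (adjoin_mk_X_zero_X_one_eq_top I2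
    (by linear_combination -r1) (by linear_combination -r4 - a * r1)) 0 r2 ?_ ?_
  · linear_combination r5 + a ^ 2 * r1 + a * r4
  · rw [zero_smul]
    exact r3

theorem I3'_span_eq_top : span ℂ {1, Ideal.Quotient.mk I3' (X 0), Ideal.Quotient.mk I3' (X 1),
    Ideal.Quotient.mk I3' (X 0) ^ 2, Ideal.Quotient.mk I3' (X 0) ^ 3} = ⊤ := by
  have rel : ∀ p ∈ ({X 0 ^ 2 - X 2, X 0 * X 1, X 1 ^ 2 - X 3, X 0 * X 2 - X 3, X 1 * X 2,
      X 0 * X 3} : Set (MvPolynomial (Fin 4) ℂ)), Ideal.Quotient.mk I3' p = 0 :=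
    fun p hp => Ideal.Quotient.eq_zero_iff_mem.2 (Ideal.subset_span hp)
  simp only [Set.mem_insert_iff, Set.mem_singleton_iff, forall_eq_or_imp, forall_eq, map_sub,
    map_mul, map_pow] at rel
  obtain ⟨r1, r2, r3, r4, -, r6⟩ := rel
  set a := Ideal.Quotient.mk I3' (X 0)
  refine span_one_pow_eq_top_of_adjoin_eq_top (adjoin_mk_X_zero_X_one_eq_top I3'
    (by linear_combination -r1) (by linear_combination -r4 - a * r1)) 1 r2 ?_ ?_
  · linear_combination r6 + a ^ 2 * r1 + a * r4
  · rw [one_smul]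
    linear_combination r3 - r4 - a * r1

section
variable {R : Type*} [CommRing R] [Algebra ℂ R] {x y : R}

theorem I2_le_ker_aeval (hx4 : x ^ 4 = 0) (hxy : x * y = 0) (hy : y ^ 2 = 0) :
    I2 ≤ RingHom.ker (aeval ![x, y, x ^ 2, x ^ 3]) := by
  rw [I2, Ideal.span_le]
  simp [Set.insert_subset_iff, hxy, hy, ← pow_succ', hx4]

theorem I3'_le_ker_aeval (hx4 : x ^ 4 = 0) (hxy : x * y = 0) (hy : y ^ 2 = x ^ 3) :
    I3' ≤ RingHom.ker (aeval ![x, y, x ^ 2, x ^ 3]) := by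
  have hyx2 : y * x ^ 2 = 0 := by linear_combination x * hxy
  rw [I3', Ideal.span_le]
  simp [Set.insert_subset_iff, hxy, hy, hyx2, ← pow_succ', hx4]

end

/-- Every commutative local ℂ-algebra `R` with `dim_ℂ R = 5`, `dim_ℂ 𝔪² = 2` and
`dim_ℂ 𝔪³ = 1` is isomorphic as a ℂ-algebra to `R₂` or to `R₃′`. -/
theorem stmt0 (R : Type) [CommRing R] [IsLocalRing R] [Algebra ℂ R]
    (h5 : Module.finrank ℂ R = 5)
    (h2 : Module.finrank ℂ
      (Submodule.restrictScalars ℂ ((IsLocalRing.maximalIdeal R) ^ 2)) = 2)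
    (h3 : Module.finrank ℂ
      (Submodule.restrictScalars ℂ ((IsLocalRing.maximalIdeal R) ^ 3)) = 1) :
    Nonempty (R ≃ₐ[ℂ] R2) ∨ Nonempty (R ≃ₐ[ℂ] R3') := by
  have : Module.Finite ℂ R := FiniteDimensional.of_finrank_eq_succ h5
  obtain ⟨x, y, hx4, hxy, hy | hy, hspan⟩ := exists_normal_form h5 h2 h3
  · exact .inl <| nonempty_algEquiv_quotient I2 I2_span_eq_top x y
      (I2_le_ker_aeval hx4 hxy hy) hspan h5
  · exact .inr <| nonempty_algEquiv_quotient I3' I3'_span_eq_top x y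
      (I3'_le_ker_aeval hx4 hxy hy) hspan h5
end

section
/- The ℂ-algebras R₂ = ℂ[S₁,S₂,S₃,S₄]/(S₁²−S₃, S₁S₂, S₂², S₁S₃−S₄, S₁S₄) and R₃′ = ℂ[S₁,S₂,S₃,S₄]/(S₁²−S₃, S₁S₂, S₂²−S₄, S₁S₃−S₄, S₂S₃, S₁S₄) are not isomorphic as ℂ-algebras. (In R₃′ there exists an element S of the maximal ideal with S² a nonzero element of 𝔪³, while in R₂ no such element exists.) -/
open MvPolynomial

/-! ### A five-dimensional model of `R₂` -/

section Mdl
@[ext] structure Mdl where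
  c0 : ℂ
  c1 : ℂ
  c2 : ℂ
  c3 : ℂ
  c4 : ℂ

namespace Mdl
instance : Add Mdl := ⟨fun x y => ⟨x.c0+y.c0, x.c1+y.c1, x.c2+y.c2, x.c3+y.c3, x.c4+y.c4⟩⟩
instance : Mul Mdl := ⟨fun x y =>
  ⟨x.c0*y.c0, x.c0*y.c1+x.c1*y.c0, x.c0*y.c2+x.c2*y.c0, x.c0*y.c3+x.c3*y.c0+x.c1*y.c1,
   x.c0*y.c4+x.c4*y.c0+x.c1*y.c3+x.c3*y.c1⟩⟩
instance : Neg Mdl := ⟨fun x => ⟨-x.c0, -x.c1, -x.c2, -x.c3, -x.c4⟩⟩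
instance : Zero Mdl := ⟨⟨0,0,0,0,0⟩⟩
instance : One Mdl := ⟨⟨1,0,0,0,0⟩⟩
@[simp] lemma add_c0 (x y : Mdl) : (x+y).c0 = x.c0+y.c0 := rfl
@[simp] lemma add_c1 (x y : Mdl) : (x+y).c1 = x.c1+y.c1 := rfl
@[simp] lemma add_c2 (x y : Mdl) : (x+y).c2 = x.c2+y.c2 := rfl
@[simp] lemma add_c3 (x y : Mdl) : (x+y).c3 = x.c3+y.c3 := rfl
@[simp] lemma add_c4 (x y : Mdl) : (x+y).c4 = x.c4+y.c4 := rfl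
@[simp] lemma mul_c0 (x y : Mdl) : (x*y).c0 = x.c0*y.c0 := rfl
@[simp] lemma mul_c1 (x y : Mdl) : (x*y).c1 = x.c0*y.c1+x.c1*y.c0 := rfl
@[simp] lemma mul_c2 (x y : Mdl) : (x*y).c2 = x.c0*y.c2+x.c2*y.c0 := rfl
@[simp] lemma mul_c3 (x y : Mdl) : (x*y).c3 = x.c0*y.c3+x.c3*y.c0+x.c1*y.c1 := rfl
@[simp] lemma mul_c4 (x y : Mdl) : (x*y).c4 = x.c0*y.c4+x.c4*y.c0+x.c1*y.c3+x.c3*y.c1 := rfl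
@[simp] lemma neg_c0 (x : Mdl) : (-x).c0 = -x.c0 := rfl
@[simp] lemma neg_c1 (x : Mdl) : (-x).c1 = -x.c1 := rfl
@[simp] lemma neg_c2 (x : Mdl) : (-x).c2 = -x.c2 := rfl
@[simp] lemma neg_c3 (x : Mdl) : (-x).c3 = -x.c3 := rfl
@[simp] lemma neg_c4 (x : Mdl) : (-x).c4 = -x.c4 := rfl
@[simp] lemma zero_c0 : (0:Mdl).c0 = 0 := rfl
@[simp] lemma zero_c1 : (0:Mdl).c1 = 0 := rfl
@[simp] lemma zero_c2 : (0:Mdl).c2 = 0 := rfl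
@[simp] lemma zero_c3 : (0:Mdl).c3 = 0 := rfl
@[simp] lemma zero_c4 : (0:Mdl).c4 = 0 := rfl
@[simp] lemma one_c0 : (1:Mdl).c0 = 1 := rfl
@[simp] lemma one_c1 : (1:Mdl).c1 = 0 := rfl
@[simp] lemma one_c2 : (1:Mdl).c2 = 0 := rfl
@[simp] lemma one_c3 : (1:Mdl).c3 = 0 := rfl
@[simp] lemma one_c4 : (1:Mdl).c4 = 0 := rfl

instance : CommRing Mdl where
  add_assoc := by intros; ext <;> simp <;> ring
  zero_add := by intros; ext <;> simp
  add_zero := by intros; ext <;> simp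
  add_comm := by intros; ext <;> simp <;> ring
  neg_add_cancel := by intros; ext <;> simp
  mul_assoc := by intros; ext <;> simp <;> ring
  one_mul := by intros; ext <;> simp
  mul_one := by intros; ext <;> simp
  left_distrib := by intros; ext <;> simp <;> ring
  right_distrib := by intros; ext <;> simp <;> ring
  zero_mul := by intros; ext <;> simp
  mul_zero := by intros; ext <;> simp
  mul_comm := by intros; ext <;> simp <;> ring
  nsmul := nsmulRec
  zsmul := zsmulRec

noncomputable def iota : ℂ →+* Mdl where
  toFun c := ⟨c,0,0,0,0⟩
  map_one' := rfl
  map_mul' a b := by ext <;> simp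
  map_zero' := rfl
  map_add' a b := by ext <;> simp
@[simp] lemma iota_c0 (c : ℂ) : (iota c).c0 = c := rfl
@[simp] lemma iota_c1 (c : ℂ) : (iota c).c1 = 0 := rfl
@[simp] lemma iota_c2 (c : ℂ) : (iota c).c2 = 0 := rfl
@[simp] lemma iota_c3 (c : ℂ) : (iota c).c3 = 0 := rfl
@[simp] lemma iota_c4 (c : ℂ) : (iota c).c4 = 0 := rfl
end Mdl
end Mdl

/-! ### The `R₂` side -/

lemma memI2 (p q1 q2 q3 q4 q5 : MvPolynomial (Fin 4) ℂ)
    (h : p = q1*(X 0 ^ 2 - X 2) + q2*(X 0 * X 1) + q3*(X 1 ^ 2) + q4*(X 0 * X 2 - X 3) + q5*(X 0 * X 3)) :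
    p ∈ I2 := by
  rw [h]
  refine add_mem (add_mem (add_mem (add_mem ?_ ?_) ?_) ?_) ?_ <;>
    refine Ideal.mul_mem_left _ _ (Ideal.subset_span ?_) <;> simp

noncomputable def gens2 : Fin 4 → Mdl := ![⟨0,1,0,0,0⟩, ⟨0,0,1,0,0⟩, ⟨0,0,0,1,0⟩, ⟨0,0,0,0,1⟩]

noncomputable def f2 : MvPolynomial (Fin 4) ℂ →+* Mdl := eval₂Hom Mdl.iota gens2

lemma f2_ker : ∀ p ∈ I2, f2 p = 0 := by
  intro p hp
  rw [← RingHom.mem_ker]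
  refine Ideal.span_le.mpr ?_ hp
  rintro q hq
  simp only [Set.mem_insert_iff, Set.mem_singleton_iff] at hq
  rw [SetLike.mem_coe, RingHom.mem_ker]
  rcases hq with rfl | rfl | rfl | rfl | rfl
  · ext <;> simp [f2, gens2, pow_two, sub_eq_add_neg]
  · ext <;> simp [f2, gens2, pow_two, sub_eq_add_neg]
  · ext <;> simp [f2, gens2, pow_two, sub_eq_add_neg]
  · ext <;> simp [f2, gens2, pow_two, sub_eq_add_neg]
  · ext <;> simp [f2, gens2, pow_two, sub_eq_add_neg]

noncomputable def phi2 : R2 →+* Mdl := Ideal.Quotient.lift I2 f2 f2_ker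

lemma Qtwo : ∃ t : R2, t^4 = 0 ∧ t^3 ≠ 0 ∧ ∀ s : R2, s^2 ≠ t^3 := by
  refine ⟨Ideal.Quotient.mk I2 (X 0), ?_, ?_, ?_⟩
  · rw [← map_pow, Ideal.Quotient.eq_zero_iff_mem]
    exact memI2 _ (X 0^2) 0 0 (X 0) 1 (by ring)
  · intro h
    have h2 := congrArg phi2 h
    rw [map_pow, map_zero] at h2
    have h3 : (phi2 (Ideal.Quotient.mk I2 (X 0)))^3 = (⟨0,0,0,0,1⟩ : Mdl) := by
      have : phi2 (Ideal.Quotient.mk I2 (X 0)) = (⟨0,1,0,0,0⟩ : Mdl) := by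
        simp [phi2, f2, gens2]
      rw [this]
      ext <;> simp [pow_succ] <;> ring
    rw [h3] at h2
    exact one_ne_zero (congrArg Mdl.c4 h2)
  · intro s hs
    have h2 := congrArg phi2 hs
    rw [map_pow, map_pow] at h2
    have h3 : (phi2 (Ideal.Quotient.mk I2 (X 0)))^3 = (⟨0,0,0,0,1⟩ : Mdl) := by
      have : phi2 (Ideal.Quotient.mk I2 (X 0)) = (⟨0,1,0,0,0⟩ : Mdl) := by
        simp [phi2, f2, gens2]
      rw [this]
      ext <;> simp [pow_succ] <;> ring
    rw [h3] at h2
    set S := phi2 s with hS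
    have e0 : S.c0 * S.c0 = 0 := by
      have := congrArg Mdl.c0 h2
      simpa [pow_succ] using this
    have hc0 : S.c0 = 0 := by
      exact mul_self_eq_zero.mp e0
    have e3 : S.c0*S.c3+S.c3*S.c0+S.c1*S.c1 = 0 := by
      have := congrArg Mdl.c3 h2
      simpa [pow_succ] using this
    have hc1 : S.c1 = 0 := by
      rw [hc0] at e3
      simpa using mul_self_eq_zero.mp (by linear_combination e3)
    have e4 := congrArg Mdl.c4 h2
    rw [pow_two] at e4
    simp [hc0, hc1] at e4

/-! ### The `R₃'` side -/

lemma memI3 (p q1 q2 q3 q4 q5 q6 : MvPolynomial (Fin 4) ℂ)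
    (h : p = q1*(X 0 ^ 2 - X 2) + q2*(X 0 * X 1) + q3*(X 1 ^ 2 - X 3) + q4*(X 0 * X 2 - X 3)
        + q5*(X 1 * X 2) + q6*(X 0 * X 3)) :
    p ∈ I3' := by
  rw [h]
  refine add_mem (add_mem (add_mem (add_mem (add_mem ?_ ?_) ?_) ?_) ?_) ?_ <;>
    refine Ideal.mul_mem_left _ _ (Ideal.subset_span ?_) <;> simp

noncomputable def u (i : Fin 4) : R3' := Ideal.Quotient.mk I3' (X i)

lemma rel3 (p q : MvPolynomial (Fin 4) ℂ) (h : p - q ∈ I3') :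
    Ideal.Quotient.mk I3' p = Ideal.Quotient.mk I3' q := Ideal.Quotient.eq.mpr h

lemma smul_mk3 (a : ℂ) (p : MvPolynomial (Fin 4) ℂ) :
    a • (Ideal.Quotient.mk I3' p) = Ideal.Quotient.mk I3' (C a * p) := by
  rw [show a • (Ideal.Quotient.mk I3' p) = Ideal.Quotient.mk I3' (a • p) from rfl,
      smul_eq_C_mul]

lemma hxx : u 0 * u 0 = u 2 := by
  simp only [u]; rw [← map_mul]; exact rel3 _ _ (memI3 _ 1 0 0 0 0 0 (by ring))
lemma hxy : u 0 * u 1 = 0 := by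
  simp only [u]; rw [← map_mul, Ideal.Quotient.eq_zero_iff_mem]; exact memI3 _ 0 1 0 0 0 0 (by ring)
lemma hyy : u 1 * u 1 = u 3 := by
  simp only [u]; rw [← map_mul]; exact rel3 _ _ (memI3 _ 0 0 1 0 0 0 (by ring))
lemma hxz : u 0 * u 2 = u 3 := by
  simp only [u]; rw [← map_mul]; exact rel3 _ _ (memI3 _ 0 0 0 1 0 0 (by ring))
lemma hyz : u 1 * u 2 = 0 := by
  simp only [u]; rw [← map_mul, Ideal.Quotient.eq_zero_iff_mem]; exact memI3 _ 0 0 0 0 1 0 (by ring)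
lemma hxw : u 0 * u 3 = 0 := by
  simp only [u]; rw [← map_mul, Ideal.Quotient.eq_zero_iff_mem]; exact memI3 _ 0 0 0 0 0 1 (by ring)
lemma hyw : u 1 * u 3 = 0 := by
  simp only [u]; rw [← map_mul, Ideal.Quotient.eq_zero_iff_mem]
  exact memI3 _ 0 (X 2) 0 (-(X 1)) 0 0 (by ring)
lemma hzz : u 2 * u 2 = 0 := by
  simp only [u]; rw [← map_mul, Ideal.Quotient.eq_zero_iff_mem]
  exact memI3 _ (-(X 2)) 0 0 (X 0) 0 1 (by ring)
lemma hzw : u 2 * u 3 = 0 := by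
  simp only [u]; rw [← map_mul, Ideal.Quotient.eq_zero_iff_mem]
  exact memI3 _ (-(X 3)) 0 0 0 0 (X 0) (by ring)
lemma hww : u 3 * u 3 = 0 := by
  simp only [u]; rw [← map_mul, Ideal.Quotient.eq_zero_iff_mem]
  exact memI3 _ 0 0 0 (-(X 3)) 0 (X 2) (by ring)

noncomputable def vv : Fin 5 → R3' := ![1, u 0, u 1, u 2, u 3]

noncomputable def eps : R3' →ₐ[ℂ] ℂ :=
  Ideal.Quotient.liftₐ I3' (aeval fun _ => (0:ℂ)) (by
    intro p hp
    rw [← RingHom.mem_ker]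
    refine Ideal.span_le.mpr ?_ hp
    rintro q hq
    simp only [Set.mem_insert_iff, Set.mem_singleton_iff] at hq
    rw [SetLike.mem_coe, RingHom.mem_ker]
    rcases hq with rfl | rfl | rfl | rfl | rfl | rfl <;> simp)

@[simp] lemma eps_mk (p : MvPolynomial (Fin 4) ℂ) :
    eps (Ideal.Quotient.mk I3' p) = aeval (fun _ => (0:ℂ)) p := rfl

lemma cube {R : Type*} [CommRing R] (x y z w α β δ η : R)
    (hxx : x*x = z) (hxy : x*y = 0) (hyy : y*y = w) (hxz : x*z = w) (hyz : y*z = 0)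
    (hxw : x*w = 0) (hyw : y*w = 0) (hzz : z*z = 0) (hzw : z*w = 0) (hww : w*w = 0) :
    (α*x+β*y+δ*z+η*w)^3 = α^3*w := by
  have h2 : (α*x+β*y+δ*z+η*w)^2 = α^2*z + (β^2+2*α*δ)*w := by
    linear_combination (α^2)*hxx + (2*α*β)*hxy + (β^2)*hyy + (2*α*δ)*hxz + (2*β*δ)*hyz
      + (2*α*η)*hxw + (2*β*η)*hyw + (δ^2)*hzz + (2*δ*η)*hzw + (η^2)*hww
  have h3 : (α^2*z + (β^2+2*α*δ)*w) * (α*x+β*y+δ*z+η*w) = α^3*w := by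
    linear_combination (α^3)*hxz + (α^2*β)*hyz + (α^2*δ)*hzz + (α^2*η)*hzw
      + ((β^2+2*α*δ)*α)*hxw + ((β^2+2*α*δ)*β)*hyw + ((β^2+2*α*δ)*δ)*hzw + ((β^2+2*α*δ)*η)*hww
  calc (α*x+β*y+δ*z+η*w)^3 = (α*x+β*y+δ*z+η*w)^2 * (α*x+β*y+δ*z+η*w) := by ring
    _ = (α^2*z + (β^2+2*α*δ)*w) * (α*x+β*y+δ*z+η*w) := by rw [h2]
    _ = α^3*w := h3

lemma span_top (r : R3') : r ∈ Submodule.span ℂ (Set.range vv) := by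
  obtain ⟨p, rfl⟩ := Ideal.Quotient.mk_surjective r
  induction p using MvPolynomial.induction_on with
  | C a =>
      have h1 : (Ideal.Quotient.mk I3') (C a) = a • vv 0 := by
        rw [show vv 0 = Ideal.Quotient.mk I3' 1 from rfl, smul_mk3, mul_one]
      rw [h1]
      exact Submodule.smul_mem _ _ (Submodule.subset_span ⟨0, rfl⟩)
  | add p q hp hq => rw [map_add]; exact add_mem hp hq
  | mul_X p i hp =>
      rw [map_mul]
      have key : ∀ r' ∈ Submodule.span ℂ (Set.range vv),
          r' * (Ideal.Quotient.mk I3') (X i) ∈ Submodule.span ℂ (Set.range vv) := by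
        intro r' hr'
        induction hr' using Submodule.span_induction with
        | mem x hx =>
            obtain ⟨j, rfl⟩ := hx
            have hXi : (Ideal.Quotient.mk I3') (X i) = u i := rfl
            rw [hXi]
            have hv : ∀ k : Fin 5, vv k ∈ Submodule.span ℂ (Set.range vv) :=
              fun k => Submodule.subset_span ⟨k, rfl⟩
            fin_cases j <;> fin_cases i <;>
              simp only [vv, Fin.isValue, Fin.zero_eta, Fin.mk_one, Fin.reduceFinMk, Matrix.cons_val_zero,
                Matrix.cons_val_one, Matrix.head_cons, Matrix.cons_val_two, Matrix.tail_cons,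
                Matrix.cons_val_three, Matrix.cons_val_four, one_mul] <;>
              first
                | exact hv 1
                | exact hv 2
                | exact hv 3
                | exact hv 4
                | (rw [hxx]; exact hv 3)
                | (rw [hxy]; exact zero_mem _)
                | (rw [mul_comm, hxy]; exact zero_mem _)
                | (rw [hyy]; exact hv 4)
                | (rw [hxz]; exact hv 4)
                | (rw [mul_comm, hxz]; exact hv 4)
                | (rw [hyz]; exact zero_mem _)
                | (rw [mul_comm, hyz]; exact zero_mem _)
                | (rw [hxw]; exact zero_mem _)
                | (rw [mul_comm, hxw]; exact zero_mem _)
                | (rw [hyw]; exact zero_mem _)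
                | (rw [mul_comm, hyw]; exact zero_mem _)
                | (rw [hzz]; exact zero_mem _)
                | (rw [hzw]; exact zero_mem _)
                | (rw [mul_comm, hzw]; exact zero_mem _)
                | (rw [hww]; exact zero_mem _)
        | zero => rw [zero_mul]; exact zero_mem _
        | add a b _ _ ha hb => rw [add_mul]; exact add_mem ha hb
        | smul c a _ ha => rw [smul_mul_assoc]; exact Submodule.smul_mem _ _ ha
      exact key _ hp

lemma notQ3 (t : R3') (ht4 : t^4 = 0) : ∃ s : R3', s^2 = t^3 := by
  obtain ⟨c, hc⟩ := (Submodule.mem_span_range_iff_exists_fun ℂ).mp (span_top t)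
  have hceps : eps t = c 0 := by
    rw [← hc, Fin.sum_univ_five]
    simp [vv, u, map_smul, eps_mk]
  have hc0 : c 0 = 0 := by
    have h1 : (eps t)^4 = 0 := by rw [← map_pow, ht4, map_zero]
    rw [hceps] at h1
    exact pow_eq_zero_iff (by norm_num) |>.mp h1
  set A : ℂ → R3' := fun c => Ideal.Quotient.mk I3' (C c) with hA
  have ht : t = A (c 1) * u 0 + A (c 2) * u 1 + A (c 3) * u 2 + A (c 4) * u 3 := by
    rw [← hc, Fin.sum_univ_five]
    simp [vv, u, hA, hc0, smul_mk3, map_mul]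
  have ht3 : t^3 = (A (c 1))^3 * u 3 := by
    rw [ht]
    exact cube (u 0) (u 1) (u 2) (u 3) _ _ _ _ hxx hxy hyy hxz hyz hxw hyw hzz hzw hww
  obtain ⟨δ, hδ⟩ := IsAlgClosed.exists_pow_nat_eq (k := ℂ) ((c 1)^3) (n := 2) (by norm_num)
  refine ⟨A δ * u 1, ?_⟩
  have h1 : (A δ * u 1)^2 = (A δ)^2 * (u 1 * u 1) := by ring
  have h2 : (A δ)^2 = A (δ^2) := by
    show (Ideal.Quotient.mk I3' (C δ))^2 = Ideal.Quotient.mk I3' (C (δ^2))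
    rw [← map_pow, ← map_pow]
  have h3 : (A (c 1))^3 = A ((c 1)^3) := by
    show (Ideal.Quotient.mk I3' (C (c 1)))^3 = Ideal.Quotient.mk I3' (C ((c 1)^3))
    rw [← map_pow, ← map_pow]
  rw [h1, hyy, h2, hδ, ht3, h3]


/-- The ℂ-algebras `R₂` and `R₃′` are not isomorphic. -/
theorem stmt1 : IsEmpty (R2 ≃ₐ[ℂ] R3') := by
  constructor
  intro e
  obtain ⟨t, ht4, ht3, hts⟩ := Qtwo
  have h4 : (e t)^4 = 0 := by rw [← map_pow, ht4, map_zero]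
  obtain ⟨s', hs'⟩ := notQ3 (e t) h4
  apply hts (e.symm s')
  calc (e.symm s')^2 = e.symm (s'^2) := (map_pow e.symm s' 2).symm
    _ = e.symm ((e t)^3) := congrArg e.symm hs'
    _ = e.symm (e (t^3)) := by rw [← map_pow e t 3]
    _ = t^3 := e.symm_apply_apply _
end

section
/- Each of the two ℂ-algebras R₂ = ℂ[S₁,S₂,S₃,S₄]/(S₁²−S₃, S₁S₂, S₂², S₁S₃−S₄, S₁S₄) and R₃′ = ℂ[S₁,S₂,S₃,S₄]/(S₁²−S₃, S₁S₂, S₂²−S₄, S₁S₃−S₄, S₂S₃, S₁S₄) is a commutative local ℂ-algebra R with dim_ℂ R = 5, dim_ℂ 𝔪_R = 4, dim_ℂ 𝔪_R² = 2 and dim_ℂ 𝔪_R³ = 1, where 𝔪_R is the maximal ideal. -/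
open MvPolynomial

/-!
Eliminating `S₃ = S₁²` and `S₄ = S₁³`, both algebras are `K[x, y]/(xy, y² - εx³, x⁴)` over
`K = ℂ`, with `ε = 0` for `R₂` and `ε = 1` for `R₃′`. The relations reduce every monomial to one of
`1, x, y, x², x³`, and these are linearly independent because they act independently in the
regular representation, which we write down as explicit `5 × 5` matrices. The ideal
`𝔪 = (x, y)` satisfies `𝔪² = ⟨x², x³⟩`, `𝔪³ = ⟨x³⟩`, `𝔪⁴ = 0`, and `A = K ⊕ 𝔪`; a nilpotent
ideal with one-dimensional complement consists exactly of the non-units, so `A` is local with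
maximal ideal `𝔪`, and the dimensions can be read off the basis.
-/

open Submodule Matrix
open scoped IsMulCommutative

variable {K A : Type*} [Field K] [CommRing A] [Algebra K A]

theorem Ideal.span_mul_span_eq_of_span_mul_span {S T U : Set A}
    (h : Submodule.span K S * Submodule.span K T = Submodule.span K U) :
    Ideal.span S * Ideal.span T = Ideal.span U := by
  rw [Ideal.span_mul_span', Ideal.span, ← span_span_of_tower K, ← Submodule.span_mul_span, h,
    span_span_of_tower, Ideal.span]

open scoped Pointwise in
theorem Ideal.restrictScalars_span_eq {W : Submodule K A} {S : Set A} (htop : 1 ⊔ W = ⊤)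
    (hWS : W * Submodule.span K S ≤ Submodule.span K S) :
    (Ideal.span S).restrictScalars K = Submodule.span K S := by
  rw [Ideal.span, ← span_smul_of_span_eq_top (Submodule.span_univ (R := K)), smul_eq_mul,
    ← Submodule.span_mul_span, Submodule.span_univ, ← htop, Submodule.sup_mul, one_mul]
  exact sup_eq_left.2 hWS

theorem finrank_span_eq_of_linearIndependent {n : ℕ} {v : Fin n → A} {S : Set A}
    (hv : LinearIndependent K v) (hS : Set.range v = S) : Module.finrank K (span K S) = n :=
  hS ▸ (finrank_span_eq_card hv).trans (Fintype.card_fin n)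

theorem exists_isLocalRing_maximalIdeal_eq [Nontrivial A] {I : Ideal A} (hI : IsNilpotent I)
    (hA : 1 ⊔ I.restrictScalars K = ⊤) :
    ∃ _ : IsLocalRing A, IsLocalRing.maximalIdeal A = I := by
  have hnil : ∀ a ∈ I, IsNilpotent a := fun a ha => by
    obtain ⟨n, hn⟩ := hI
    exact ⟨n, by simpa [hn] using Ideal.pow_mem_pow ha n⟩
  have key : ∀ a, a ∈ nonunits A ↔ a ∈ I := by
    intro a
    refine ⟨fun ha => ?_, fun ha => (hnil a ha).not_isUnit⟩
    obtain ⟨u, hu, m, hm, rfl⟩ := mem_sup.1 (hA ▸ mem_top : a ∈ 1 ⊔ I.restrictScalars K)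
    obtain ⟨c, rfl⟩ := mem_one.1 hu
    rcases eq_or_ne c 0 with rfl | hc
    · simpa using hm
    · exact absurd ((hnil m hm).isUnit_add_left_of_commute
        ((isUnit_iff_ne_zero.2 hc).map (algebraMap K A)) (Commute.all _ _)) ha
  exact ⟨.of_nonunits_add fun a b ha hb => (key _).2 (add_mem ((key a).1 ha) ((key b).1 hb)),
    Ideal.ext key⟩

structure SatisfiesRelations (ε : K) (x y : A) : Prop where
  mul_eq_zero : x * y = 0
  sq_eq : y ^ 2 = ε • x ^ 3
  pow_four : x ^ 4 = 0

namespace SatisfiesRelations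

variable {ε : K} {x y : A}

theorem pow_eq_zero (h : SatisfiesRelations ε x y) {n : ℕ} (hn : 4 ≤ n) : x ^ n = 0 :=
  pow_eq_zero_of_le hn h.pow_four

theorem pow_mul_eq_zero (h : SatisfiesRelations ε x y) {n : ℕ} (hn : 1 ≤ n) : x ^ n * y = 0 := by
  rw [← Nat.sub_add_cancel hn, pow_succ, mul_assoc, h.mul_eq_zero, mul_zero]

theorem span_mul_span_eq_sq (h : SatisfiesRelations ε x y) :
    span K {x, y, x ^ 2, x ^ 3} * span K {x, y, x ^ 2, x ^ 3} = span K {x ^ 2, x ^ 3} := by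
  rw [span_mul_span]
  apply le_antisymm
  · rw [span_le, Set.mul_subset_iff]
    simp only [Set.mem_insert_iff, Set.mem_singleton_iff, forall_eq_or_imp, forall_eq]
    ring_nf
    simp [h.pow_eq_zero, h.pow_mul_eq_zero, h.mul_eq_zero, h.sq_eq, mem_span_of_mem, smul_mem]
  · rw [span_le, Set.insert_subset_iff, Set.singleton_subset_iff]
    refine ⟨subset_span ?_, subset_span ?_⟩
    · exact pow_two x ▸ Set.mul_mem_mul (by simp) (by simp)
    · exact pow_succ x 2 ▸ Set.mul_mem_mul (by simp) (by simp)

theorem span_mul_span_eq_cube (h : SatisfiesRelations ε x y) :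
    span K {x, y, x ^ 2, x ^ 3} * span K {x ^ 2, x ^ 3} = span K {x ^ 3} := by
  rw [span_mul_span]
  apply le_antisymm
  · rw [span_le, Set.mul_subset_iff]
    simp only [Set.mem_insert_iff, Set.mem_singleton_iff, forall_eq_or_imp, forall_eq]
    ring_nf
    simp [h.pow_eq_zero, h.pow_mul_eq_zero, mem_span_of_mem]
  · rw [span_le, Set.singleton_subset_iff]
    exact subset_span (pow_succ' x 2 ▸ Set.mul_mem_mul (by simp) (by simp))

theorem span_mul_span_eq_bot (h : SatisfiesRelations ε x y) :
    span K {x, y, x ^ 2, x ^ 3} * span K {x ^ 3} = ⊥ := by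
  rw [span_mul_span, eq_bot_iff, span_le, Set.mul_subset_iff]
  simp only [Set.mem_insert_iff, Set.mem_singleton_iff, forall_eq_or_imp, forall_eq]
  ring_nf
  simp [h.pow_eq_zero, h.pow_mul_eq_zero]

theorem one_sup_span_eq_top (h : SatisfiesRelations ε x y) (hgen : Algebra.adjoin K {x, y} = ⊤) :
    1 ⊔ span K {x, y, x ^ 2, x ^ 3} = ⊤ := by
  set W := span K {x, y, x ^ 2, x ^ 3}
  have hW : W * W ≤ W := h.span_mul_span_eq_sq.trans_le (span_mono (by simp [Set.subset_def]))
  have hmul : (1 ⊔ W) * (1 ⊔ W) ≤ 1 ⊔ W := by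
    rw [Submodule.sup_mul, Submodule.mul_sup, Submodule.mul_sup, one_mul, mul_one, one_mul]
    exact sup_le (sup_le le_sup_left le_sup_right) (sup_le le_sup_right (hW.trans le_sup_right))
  let S := (1 ⊔ W).toSubalgebra (one_le.1 le_sup_left) fun a b ha hb => hmul (mul_mem_mul ha hb)
  have hS : Algebra.adjoin K {x, y} ≤ S := Algebra.adjoin_le fun a ha =>
    mem_sup_right (subset_span (by rcases ha with rfl | rfl <;> simp))
  exact eq_top_iff.2 fun a _ => (hgen ▸ hS) (Algebra.mem_top (x := a))

theorem ideal_span_sq (h : SatisfiesRelations ε x y) :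
    Ideal.span {x, y, x ^ 2, x ^ 3} ^ 2 = Ideal.span {x ^ 2, x ^ 3} := by
  rw [pow_two]
  exact Ideal.span_mul_span_eq_of_span_mul_span h.span_mul_span_eq_sq

theorem ideal_span_cube (h : SatisfiesRelations ε x y) :
    Ideal.span {x, y, x ^ 2, x ^ 3} ^ 3 = Ideal.span {x ^ 3} := by
  rw [pow_succ', h.ideal_span_sq]
  exact Ideal.span_mul_span_eq_of_span_mul_span h.span_mul_span_eq_cube

theorem ideal_span_pow_four (h : SatisfiesRelations ε x y) :
    Ideal.span {x, y, x ^ 2, x ^ 3} ^ 4 = ⊥ := by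
  rw [pow_succ', h.ideal_span_cube, ← Ideal.span_empty]
  exact Ideal.span_mul_span_eq_of_span_mul_span (h.span_mul_span_eq_bot.trans span_empty.symm)

theorem restrictScalars_ideal_span (h : SatisfiesRelations ε x y)
    (hgen : Algebra.adjoin K {x, y} = ⊤) :
    (Ideal.span {x, y, x ^ 2, x ^ 3}).restrictScalars K = span K {x, y, x ^ 2, x ^ 3} :=
  Ideal.restrictScalars_span_eq (h.one_sup_span_eq_top hgen)
    (h.span_mul_span_eq_sq.trans_le (span_mono (by simp [Set.subset_def])))

theorem restrictScalars_ideal_span_sq (h : SatisfiesRelations ε x y)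
    (hgen : Algebra.adjoin K {x, y} = ⊤) :
    (Ideal.span {x, y, x ^ 2, x ^ 3} ^ 2).restrictScalars K = span K {x ^ 2, x ^ 3} := by
  rw [h.ideal_span_sq]
  exact Ideal.restrictScalars_span_eq (h.one_sup_span_eq_top hgen)
    (h.span_mul_span_eq_cube.trans_le (span_mono (by simp [Set.subset_def])))

theorem restrictScalars_ideal_span_cube (h : SatisfiesRelations ε x y)
    (hgen : Algebra.adjoin K {x, y} = ⊤) :
    (Ideal.span {x, y, x ^ 2, x ^ 3} ^ 3).restrictScalars K = span K {x ^ 3} := by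
  rw [h.ideal_span_cube]
  exact Ideal.restrictScalars_span_eq (h.one_sup_span_eq_top hgen)
    (h.span_mul_span_eq_bot.trans_le bot_le)

theorem exists_isLocalRing_finrank (h : SatisfiesRelations ε x y)
    (hli : LinearIndependent K ![1, x, y, x ^ 2, x ^ 3]) (hgen : Algebra.adjoin K {x, y} = ⊤) :
    ∃ _ : IsLocalRing A,
      Module.finrank K A = 5 ∧
      Module.finrank K ((IsLocalRing.maximalIdeal A).restrictScalars K) = 4 ∧
      Module.finrank K ((IsLocalRing.maximalIdeal A ^ 2).restrictScalars K) = 2 ∧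
      Module.finrank K ((IsLocalRing.maximalIdeal A ^ 3).restrictScalars K) = 1 := by
  have : Nontrivial A := nontrivial_of_ne _ _ (hli.ne_zero 0)
  obtain ⟨hl, hmax⟩ := exists_isLocalRing_maximalIdeal_eq ⟨4, h.ideal_span_pow_four⟩
    (h.restrictScalars_ideal_span hgen ▸ h.one_sup_span_eq_top hgen)
  have hli₁ := (linearIndependent_finCons.1 hli).1
  have hli₂ := (linearIndependent_finCons.1 (linearIndependent_finCons.1 hli₁).1).1
  have hli₃ := (linearIndependent_finCons.1 hli₂).1
  refine ⟨hl, ?_, ?_, ?_, ?_⟩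
  · rw [← finrank_top, ← h.one_sup_span_eq_top hgen, one_eq_span, ← span_insert]
    refine finrank_span_eq_of_linearIndependent hli ?_
    simp only [Matrix.range_cons, Matrix.range_empty, Set.union_empty, Set.singleton_union]
  · rw [hmax, h.restrictScalars_ideal_span hgen]
    refine finrank_span_eq_of_linearIndependent hli₁ ?_
    simp only [Matrix.range_cons, Matrix.range_empty, Set.union_empty, Set.singleton_union]
  · rw [hmax, h.restrictScalars_ideal_span_sq hgen]
    refine finrank_span_eq_of_linearIndependent hli₂ ?_
    simp only [Matrix.range_cons, Matrix.range_empty, Set.union_empty, Set.singleton_union]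
  · rw [hmax, h.restrictScalars_ideal_span_cube hgen]
    exact finrank_span_eq_of_linearIndependent hli₃ (Matrix.range_cons_empty _ _)

end SatisfiesRelations

-- Multiplication by `x` and by `y` in the basis `1, x, y, x², x³`.
def regRepX : Matrix (Fin 5) (Fin 5) K :=
  !![0, 0, 0, 0, 0; 1, 0, 0, 0, 0; 0, 0, 0, 0, 0; 0, 1, 0, 0, 0; 0, 0, 0, 1, 0]

def regRepY (ε : K) : Matrix (Fin 5) (Fin 5) K :=
  !![0, 0, 0, 0, 0; 0, 0, 0, 0, 0; 1, 0, 0, 0, 0; 0, 0, 0, 0, 0; 0, 0, ε, 0, 0]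

theorem regRepX_mul_regRepY (ε : K) : regRepX * regRepY ε = 0 := by
  ext i j; fin_cases i <;> fin_cases j <;> simp [regRepX, regRepY, mul_apply, Fin.sum_univ_five]

theorem regRepY_mul_regRepX (ε : K) : regRepY ε * regRepX = 0 := by
  ext i j; fin_cases i <;> fin_cases j <;> simp [regRepX, regRepY, mul_apply, Fin.sum_univ_five]

theorem regRepY_sq (ε : K) : regRepY ε ^ 2 = ε • regRepX ^ 3 := by
  ext i j; fin_cases i <;> fin_cases j <;>
    simp [regRepX, regRepY, pow_succ, mul_apply, Fin.sum_univ_five]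

theorem regRepX_pow_four : (regRepX : Matrix (Fin 5) (Fin 5) K) ^ 4 = 0 := by
  ext i j; fin_cases i <;> fin_cases j <;> simp [regRepX, pow_succ, mul_apply, Fin.sum_univ_five]

theorem regRep_mulVec_single (ε : K) (j : Fin 5) :
    ![1, regRepX, regRepY ε, regRepX ^ 2, regRepX ^ 3] j *ᵥ Pi.single 0 1 = Pi.single j 1 := by
  fin_cases j <;> ext i <;> fin_cases i <;>
    simp [regRepX, regRepY, pow_succ, Fin.sum_univ_five, mulVec, dotProduct]

abbrev regRepAlgebra (ε : K) : Subalgebra K (Matrix (Fin 5) (Fin 5) K) :=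
  Algebra.adjoin K {regRepX, regRepY ε}

instance (ε : K) : IsMulCommutative (regRepAlgebra ε) := Algebra.isMulCommutative_adjoin K <| by
  rintro a (rfl | rfl) b (rfl | rfl) <;> simp [regRepX_mul_regRepY, regRepY_mul_regRepX]

namespace regRepAlgebra

def x (ε : K) : regRepAlgebra ε :=
  ⟨regRepX, Set.mem_of_subset_of_mem Algebra.subset_adjoin (by simp)⟩

def y (ε : K) : regRepAlgebra ε :=
  ⟨regRepY ε, Set.mem_of_subset_of_mem Algebra.subset_adjoin (by simp)⟩

theorem satisfiesRelations (ε : K) : SatisfiesRelations ε (x ε) (y ε) where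
  mul_eq_zero := Subtype.ext (regRepX_mul_regRepY ε)
  sq_eq := Subtype.ext (regRepY_sq ε)
  pow_four := Subtype.ext regRepX_pow_four

theorem linearIndependent (ε : K) :
    LinearIndependent K ![1, x ε, y ε, x ε ^ 2, x ε ^ 3] := by
  let f := LinearMap.applyₗ (Pi.single 0 1) ∘ₗ Matrix.toLin'.toLinearMap ∘ₗ
    (regRepAlgebra ε).val.toLinearMap
  refine LinearIndependent.of_comp f ?_
  convert (Pi.basisFun K (Fin 5)).linearIndependent
  ext j : 1
  rw [Pi.basisFun_apply, ← regRep_mulVec_single ε j]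
  fin_cases j <;> rfl

end regRepAlgebra

noncomputable def relationIdeal (ε : K) : Ideal (MvPolynomial (Fin 4) K) :=
  Ideal.span {X 0 ^ 2 - X 2, X 0 * X 1, X 1 ^ 2 - C ε * X 3, X 0 * X 2 - X 3, X 0 * X 3}

namespace relationIdeal

variable {ε : K}

theorem le_ker_aeval {x y : A} (h : SatisfiesRelations ε x y) :
    relationIdeal ε ≤ RingHom.ker (aeval ![x, y, x ^ 2, x ^ 3]) := by
  rw [relationIdeal, Ideal.span_le]
  rintro p (rfl | rfl | rfl | rfl | rfl) <;>
    simp [← pow_succ', h.mul_eq_zero, h.sq_eq, h.pow_four, Algebra.smul_def]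

noncomputable def lift {x y : A} (h : SatisfiesRelations ε x y) :
    MvPolynomial (Fin 4) K ⧸ relationIdeal ε →ₐ[K] A :=
  Ideal.Quotient.liftₐ _ (aeval ![x, y, x ^ 2, x ^ 3]) fun _ hp =>
    RingHom.mem_ker.1 (le_ker_aeval h hp)

theorem lift_mk_X {x y : A} (h : SatisfiesRelations ε x y) (i : Fin 4) :
    lift h (Ideal.Quotient.mk _ (X i)) = ![x, y, x ^ 2, x ^ 3] i :=
  aeval_X _ i

theorem mk_X_two : Ideal.Quotient.mk (relationIdeal ε) (X 2) = Ideal.Quotient.mk _ (X 0) ^ 2 := by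
  rw [← map_pow]
  exact (Ideal.Quotient.eq.2 (Ideal.subset_span (by simp))).symm

theorem mk_X_three :
    Ideal.Quotient.mk (relationIdeal ε) (X 3) = Ideal.Quotient.mk _ (X 0) ^ 3 := by
  rw [pow_succ', ← mk_X_two, ← map_mul]
  exact (Ideal.Quotient.eq.2 (Ideal.subset_span (by simp))).symm

theorem satisfiesRelations : SatisfiesRelations ε
    (Ideal.Quotient.mk (relationIdeal ε) (X 0)) (Ideal.Quotient.mk _ (X 1)) where
  mul_eq_zero := by
    rw [← map_mul, Ideal.Quotient.eq_zero_iff_mem]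
    exact Ideal.subset_span (by simp)
  sq_eq := by
    rw [← mk_X_three, Algebra.smul_def, ← map_pow, ← Ideal.Quotient.mk_algebraMap, ← map_mul]
    exact Ideal.Quotient.eq.2 (Ideal.subset_span (by simp [MvPolynomial.algebraMap_eq]))
  pow_four := by
    rw [pow_succ', ← mk_X_three, ← map_mul, Ideal.Quotient.eq_zero_iff_mem]
    exact Ideal.subset_span (by simp)

theorem adjoin_eq_top :
    Algebra.adjoin K {Ideal.Quotient.mk (relationIdeal ε) (X 0), Ideal.Quotient.mk _ (X 1)} = ⊤ := by
  refine eq_top_iff.2 fun q _ => ?_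
  obtain ⟨p, rfl⟩ := Ideal.Quotient.mk_surjective q
  have hx : Ideal.Quotient.mk (relationIdeal ε) (X 0) ∈
      Algebra.adjoin K {Ideal.Quotient.mk (relationIdeal ε) (X 0), Ideal.Quotient.mk _ (X 1)} :=
    Algebra.subset_adjoin (by simp)
  induction p using MvPolynomial.induction_on with
  | C a => exact Subalgebra.algebraMap_mem _ a
  | add p q hp hq => rw [map_add]; exact add_mem (hp trivial) (hq trivial)
  | mul_X p i hp =>
    rw [map_mul]
    refine mul_mem (hp trivial) ?_
    fin_cases i
    · exact hx
    · exact Algebra.subset_adjoin (by simp)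
    · simpa [mk_X_two] using pow_mem hx 2
    · simpa [mk_X_three] using pow_mem hx 3

theorem linearIndependent_of_satisfiesRelations {x y : A} (h : SatisfiesRelations ε x y)
    (hli : LinearIndependent K ![1, x, y, x ^ 2, x ^ 3]) :
    LinearIndependent K ![1, Ideal.Quotient.mk (relationIdeal ε) (X 0),
      Ideal.Quotient.mk _ (X 1), Ideal.Quotient.mk _ (X 0) ^ 2, Ideal.Quotient.mk _ (X 0) ^ 3] := by
  refine LinearIndependent.of_comp (lift h).toLinearMap ?_
  convert hli
  ext j
  fin_cases j <;> simp [lift_mk_X h 0, lift_mk_X h 1]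

theorem exists_isLocalRing_finrank (ε : K) :
    let Q := MvPolynomial (Fin 4) K ⧸ relationIdeal ε
    ∃ _ : IsLocalRing Q,
      Module.finrank K Q = 5 ∧
      Module.finrank K ((IsLocalRing.maximalIdeal Q).restrictScalars K) = 4 ∧
      Module.finrank K ((IsLocalRing.maximalIdeal Q ^ 2).restrictScalars K) = 2 ∧
      Module.finrank K ((IsLocalRing.maximalIdeal Q ^ 3).restrictScalars K) = 1 :=
  satisfiesRelations.exists_isLocalRing_finrank
    (linearIndependent_of_satisfiesRelations (regRepAlgebra.satisfiesRelations ε)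
      (regRepAlgebra.linearIndependent ε))
    adjoin_eq_top

end relationIdeal

theorem I2_eq_relationIdeal : I2 = relationIdeal (0 : ℂ) := by
  simp [I2, relationIdeal]

theorem I3'_eq_relationIdeal : I3' = relationIdeal (1 : ℂ) := by
  apply le_antisymm
  · rw [I3', Ideal.span_le]
    rintro p (rfl | rfl | rfl | rfl | rfl | rfl)
    iterate 4 exact Ideal.subset_span (by simp)
    · rw [SetLike.mem_coe, show (X 1 * X 2 : MvPolynomial (Fin 4) ℂ) =
        X 0 * (X 0 * X 1) - X 1 * (X 0 ^ 2 - X 2) by ring]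
      exact sub_mem (Ideal.mul_mem_left _ _ (Ideal.subset_span (by simp)))
        (Ideal.mul_mem_left _ _ (Ideal.subset_span (by simp)))
    · exact Ideal.subset_span (by simp)
  · exact Ideal.span_mono (by simp [Set.subset_def])

/-- Each of `R₂` and `R₃′` is a commutative local ℂ-algebra of ℂ-dimension 5 whose maximal
ideal `𝔪` satisfies `dim_ℂ 𝔪 = 4`, `dim_ℂ 𝔪² = 2` and `dim_ℂ 𝔪³ = 1`. -/
theorem stmt2 :
    (∃ h : IsLocalRing R2,
      Module.finrank ℂ R2 = 5 ∧
      Module.finrank ℂ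
        (Submodule.restrictScalars ℂ (@IsLocalRing.maximalIdeal R2 _ h)) = 4 ∧
      Module.finrank ℂ
        (Submodule.restrictScalars ℂ ((@IsLocalRing.maximalIdeal R2 _ h) ^ 2)) = 2 ∧
      Module.finrank ℂ
        (Submodule.restrictScalars ℂ ((@IsLocalRing.maximalIdeal R2 _ h) ^ 3)) = 1) ∧
    (∃ h : IsLocalRing R3',
      Module.finrank ℂ R3' = 5 ∧
      Module.finrank ℂ
        (Submodule.restrictScalars ℂ (@IsLocalRing.maximalIdeal R3' _ h)) = 4 ∧
      Module.finrank ℂ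
        (Submodule.restrictScalars ℂ ((@IsLocalRing.maximalIdeal R3' _ h) ^ 2)) = 2 ∧
      Module.finrank ℂ
        (Submodule.restrictScalars ℂ ((@IsLocalRing.maximalIdeal R3' _ h) ^ 3)) = 1) := by
  unfold R2 R3'
  rw [I2_eq_relationIdeal, I3'_eq_relationIdeal]
  exact ⟨relationIdeal.exists_isLocalRing_finrank 0, relationIdeal.exists_isLocalRing_finrank 1⟩
end

section
/- Let R be a commutative local ℂ-algebra with dim_ℂ R = n+2 (n ≥ 1) and maximal ideal 𝔪_R. If 𝔪_R² ≠ 0, then there exist elements a₁, …, aₙ ∈ 𝔪_R that are linearly independent over ℂ and generate R as a unital ℂ-algebra. -/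
open Module Submodule IsLocalRing

/-! Since the residue field is `ℂ`, `R = ℂ ∙ 1 ⊕ 𝔪` and `dim 𝔪 = n + 1`. Pick `0 ≠ x ∈ 𝔪²` and a
complement `S` of `ℂ ∙ x` in `𝔪`: then `dim S = n` and `𝔪 = S + 𝔪²`. A basis of `S` generates `R`,
because `𝔪 ^ j ⊆ ℂ[S] + 𝔪 ^ (j + 1)` for every `j` and `𝔪` is nilpotent. -/

section Generation

variable {K R : Type*} [CommSemiring K] [Semiring R] [Algebra K R]

theorem Subalgebra.pow_le_toSubmodule_sup_pow_succ (A : Subalgebra K R) {S M : Submodule K R}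
    (hSA : S ≤ Subalgebra.toSubmodule A) (hSM : S ≤ M) (hM : M ≤ S ⊔ M * M) (j : ℕ) :
    M ^ j ≤ Subalgebra.toSubmodule A ⊔ M ^ (j + 1) := by
  set A' := Subalgebra.toSubmodule A
  induction j with
  | zero => exact le_sup_of_le_left (Submodule.one_le.2 A.one_mem)
  | succ j ih =>
    calc M ^ (j + 1) = M ^ j * M := pow_succ M j
      _ ≤ M ^ j * S ⊔ M ^ (j + 2) := by
          rw [pow_succ _ (j + 1), pow_succ, mul_assoc, ← Submodule.mul_sup]
          exact mul_le_mul_right hM _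
      _ ≤ (A' ⊔ M ^ (j + 1)) * S ⊔ M ^ (j + 2) := by gcongr
      _ ≤ A' ⊔ M ^ (j + 2) := by
          have hAS : A' * S ≤ A' :=
            (mul_le_mul_right hSA _).trans A.isIdempotentElem_toSubmodule.le
          have hMS : M ^ (j + 1) * S ≤ M ^ (j + 2) :=
            (mul_le_mul_right hSM _).trans (pow_succ M (j + 1)).ge
          rw [Submodule.sup_mul, sup_assoc]
          exact sup_le_sup hAS (sup_le hMS le_rfl)

theorem Subalgebra.pow_le_toSubmodule_of_le_sup_mul (A : Subalgebra K R) {S M : Submodule K R}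
    (hSA : S ≤ Subalgebra.toSubmodule A) (hSM : S ≤ M) (hM : M ≤ S ⊔ M * M) {k : ℕ}
    (hk : M ^ k = ⊥) (j : ℕ) : M ^ j ≤ Subalgebra.toSubmodule A := by
  have key : ∀ i, M ^ j ≤ Subalgebra.toSubmodule A ⊔ M ^ (j + i) := by
    intro i
    induction i with
    | zero => exact le_sup_right
    | succ i ih =>
      refine ih.trans ?_
      rw [← add_assoc]
      exact sup_le le_sup_left (A.pow_le_toSubmodule_sup_pow_succ hSA hSM hM (j + i))
  simpa [pow_add, hk] using key k

end Generation

theorem Submodule.exists_sup_span_singleton_eq {K V : Type*} [DivisionRing K] [AddCommGroup V]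
    [Module K V] [FiniteDimensional K V] {M : Submodule K V} {x : V} (hx : x ∈ M) (hx0 : x ≠ 0) :
    ∃ S ≤ M, S ⊔ (K ∙ x) = M ∧ finrank K S + 1 = finrank K M := by
  obtain ⟨C, hC⟩ := (K ∙ x).exists_isCompl
  have hxM : (K ∙ x) ≤ M := (span_singleton_le_iff_mem x M).2 hx
  have hsup : C ⊓ M ⊔ (K ∙ x) = M := by
    rw [sup_comm, ← sup_inf_assoc_of_le C hxM, hC.codisjoint.eq_top, top_inf_eq]
  have hinf : C ⊓ M ⊓ (K ∙ x) = ⊥ :=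
    eq_bot_iff.2 fun y hy => hC.disjoint.le_bot ⟨hy.2, hy.1.1⟩
  refine ⟨C ⊓ M, inf_le_right, hsup, ?_⟩
  have := finrank_sup_add_finrank_inf_eq (C ⊓ M) (K ∙ x)
  rwa [hsup, hinf, finrank_bot, add_zero, finrank_span_singleton hx0, eq_comm] at this

theorem IsLocalRing.isCompl_span_one_maximalIdeal {K R : Type*} [Field K] [CommRing R]
    [IsLocalRing R] [Algebra K R] (h : Function.Surjective (algebraMap K (ResidueField R))) :
    IsCompl (K ∙ (1 : R)) ((maximalIdeal R).restrictScalars K) := by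
  constructor
  · rw [disjoint_iff, eq_bot_iff]
    rintro _ ⟨hy, hym⟩
    obtain ⟨c, rfl⟩ := mem_span_singleton.1 hy
    by_contra hc
    have hc0 : c ≠ 0 := by rintro rfl; simp at hc
    rw [← Algebra.algebraMap_eq_smul_one] at hym
    exact (mem_maximalIdeal _).1 hym ((algebraMap K R).isUnit_map (Ne.isUnit hc0))
  · rw [codisjoint_iff, eq_top_iff]
    intro r _
    obtain ⟨c, hc⟩ := h (residue R r)
    have hrc : r - algebraMap K R c ∈ maximalIdeal R := by
      rw [← residue_eq_zero_iff, map_sub, ← hc, ← ResidueField.algebraMap_eq,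
        ← IsScalarTower.algebraMap_apply, sub_self]
    rw [← add_sub_cancel (algebraMap K R c) r]
    exact add_mem_sup (mem_span_singleton.2 ⟨c, (Algebra.algebraMap_eq_smul_one c).symm⟩) hrc

theorem IsLocalRing.algebraMap_residueField_surjective (K R : Type*) [Field K] [IsAlgClosed K]
    [CommRing R] [IsLocalRing R] [Algebra K R] [FiniteDimensional K R] :
    Function.Surjective (algebraMap K (ResidueField R)) :=
  have : Module.Finite K (ResidueField R) :=
    Module.Finite.of_surjective (IsScalarTower.toAlgHom K R (ResidueField R)).toLinearMap
      residue_surjective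
  IsAlgClosed.algebraMap_bijective_of_isIntegral.2

theorem IsLocalRing.exists_pow_maximalIdeal_eq_bot (K R : Type*) [Field K] [CommRing R]
    [IsLocalRing R] [Algebra K R] [FiniteDimensional K R] : ∃ k, maximalIdeal R ^ k = ⊥ := by
  have : IsArtinianRing R := isArtinian_of_tower K inferInstance
  exact (isArtinianRing_iff_isNilpotent_maximalIdeal R).1 inferInstance

theorem Submodule.exists_linearIndependent_fin_span_eq {K V : Type*} [DivisionRing K]
    [AddCommGroup V] [Module K V] (S : Submodule K V) [Module.Finite K S] {n : ℕ}
    (hS : finrank K S = n) :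
    ∃ a : Fin n → V, (∀ i, a i ∈ S) ∧ LinearIndependent K a ∧ span K (Set.range a) = S := by
  have : Module.Finite K (span K (S : Set V)) := by rwa [span_eq]
  have := exists_fun_fin_finrank_span_eq K (S : Set V)
  rw [span_eq] at this
  subst hS
  obtain ⟨a, haS, hspan, hli⟩ := this
  exact ⟨a, haS, hli, hspan⟩

theorem stmt4_general (n : ℕ) (R : Type) [CommRing R] [IsLocalRing R] [Algebra ℂ R]
    (hdim : Module.finrank ℂ R = n + 2)
    (hm2 : (IsLocalRing.maximalIdeal R) ^ 2 ≠ ⊥) :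
    ∃ a : Fin n → R,
      (∀ i, a i ∈ IsLocalRing.maximalIdeal R) ∧
      LinearIndependent ℂ a ∧
      Algebra.adjoin ℂ (Set.range a) = ⊤ := by
  have : FiniteDimensional ℂ R := .of_finrank_pos (by omega)
  have : Nontrivial R := nontrivial_of_finrank_pos (R := ℂ) (by omega)
  set M := (maximalIdeal R).restrictScalars ℂ
  have hcompl : IsCompl (ℂ ∙ 1) M :=
    isCompl_span_one_maximalIdeal (algebraMap_residueField_surjective ℂ R)
  have hMrank : finrank ℂ M = n + 1 := by
    have := finrank_add_eq_of_isCompl hcompl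
    rw [finrank_span_singleton one_ne_zero, hdim] at this
    omega
  obtain ⟨x, hx, hx0⟩ := exists_mem_ne_zero_of_ne_bot hm2
  obtain ⟨S, hSM, hSx, hSrank⟩ :=
    exists_sup_span_singleton_eq (M := M) (Ideal.pow_le_self two_ne_zero hx) hx0
  have hxM2 : (ℂ ∙ x) ≤ M * M := by
    rw [← pow_two, ← restrictScalars_pow two_ne_zero]
    exact (span_singleton_le_iff_mem _ _).2 hx
  have hMS : M ≤ S ⊔ M * M := hSx.ge.trans (sup_le_sup_left hxM2 S)
  obtain ⟨k, hk⟩ := exists_pow_maximalIdeal_eq_bot ℂ R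
  have hMk : M ^ (k + 1) = ⊥ := by
    rw [← restrictScalars_pow k.succ_ne_zero, pow_succ, hk, Ideal.bot_mul, restrictScalars_bot]
  obtain ⟨a, haS, hli, hspan⟩ := S.exists_linearIndependent_fin_span_eq (n := n) (by omega)
  refine ⟨a, fun i => hSM (haS i), hli, ?_⟩
  set A := Algebra.adjoin ℂ (Set.range a)
  have hSA : S ≤ Subalgebra.toSubmodule A := hspan ▸ span_le.2 Algebra.subset_adjoin
  have hMA : M ≤ Subalgebra.toSubmodule A := by
    simpa using A.pow_le_toSubmodule_of_le_sup_mul hSA hSM hMS hMk 1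
  apply Subalgebra.toSubmodule_injective
  rw [Algebra.top_toSubmodule, eq_top_iff, ← hcompl.sup_eq_top]
  exact sup_le (span_le.2 (Set.singleton_subset_iff.2 A.one_mem)) hMA

/-- Let `R` be a commutative local ℂ-algebra with `dim_ℂ R = n + 2` (`n ≥ 1`) and maximal
ideal `𝔪`. If `𝔪² ≠ 0`, then there exist `n` elements of `𝔪` that are linearly independent
over ℂ and generate `R` as a unital ℂ-algebra. -/
theorem stmt4 (n : ℕ) (hn : 1 ≤ n) (R : Type) [CommRing R] [IsLocalRing R] [Algebra ℂ R]
    (hdim : Module.finrank ℂ R = n + 2)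
    (hm2 : (IsLocalRing.maximalIdeal R) ^ 2 ≠ ⊥) :
    ∃ a : Fin n → R,
      (∀ i, a i ∈ IsLocalRing.maximalIdeal R) ∧
      LinearIndependent ℂ a ∧
      Algebra.adjoin ℂ (Set.range a) = ⊤ :=
  stmt4_general n R hdim hm2
end

section
/- Let n ≥ 2 and let R be a commutative local ℂ-algebra with maximal ideal 𝔪_R such that dim_ℂ R = n+2, dim_ℂ 𝔪_R² = 1, and for every x ∈ 𝔪_R with x ∉ 𝔪_R² there exists y ∈ 𝔪_R with x·y ≠ 0. Then R is isomorphic as a ℂ-algebra to ℂ[S₁,…,Sₙ]/I, where I is the ideal generated by all SᵢSⱼ with i ≠ j together with all Sₖ² − Sₗ² (1 ≤ k, l ≤ n). In particular, any two commutative local ℂ-algebras of dimension n+2 satisfying these conditions are isomorphic. -/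
open MvPolynomial

/-- The ideal of `ℂ[S₁,…,Sₙ]` generated by all `SᵢSⱼ` with `i ≠ j` together with all
`Sₖ² − Sₗ²`. -/
noncomputable def Iq (n : ℕ) : Ideal (MvPolynomial (Fin n) ℂ) :=
  Ideal.span ({p | ∃ i j : Fin n, i ≠ j ∧ p = X i * X j} ∪
    {p | ∃ k l : Fin n, p = X k ^ 2 - X l ^ 2})

/-- The algebra `ℂ[S₁,…,Sₙ]/(SᵢSⱼ (i ≠ j), Sₖ² − Sₗ²)`. -/
noncomputable abbrev Qalg (n : ℕ) : Type := MvPolynomial (Fin n) ℂ ⧸ Iq n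

/-!
Because `ℂ` is algebraically closed, `R = ℂ ⊕ 𝔪`, and since `𝔪²` is a line, Nakayama's lemma
gives `𝔪³ = 0`. Fix a generator `t` of `𝔪²` and a complement `W` of `𝔪²` in `𝔪`. Multiplication
gives a symmetric bilinear form `W × W → 𝔪² ≅ ℂ`, which the pairing hypothesis makes
nondegenerate. An orthonormal basis `x₁, …, xₙ` then satisfies `xᵢ xⱼ = δᵢⱼ t`, so `Sᵢ ↦ xᵢ`
induces a surjection `ℂ[S]/I → R`. Finally, `ℂ[S]/I` is spanned by `1, S₁², S₁, …, Sₙ`, so its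
dimension is at most `n + 2 = dim R` and the surjection is an isomorphism.
-/

open Module Submodule IsLocalRing

theorem Submodule.span_eq_top_of_adjoin_eq_top {K A : Type*} [CommSemiring K] [Semiring A]
    [Algebra K A] {s t : Set A} (hs : Algebra.adjoin K s = ⊤) (ht : (1 : A) ∈ span K t)
    (hmul : ∀ a ∈ s, ∀ b ∈ t, a * b ∈ span K t) : span K t = ⊤ := by
  have key : ∀ a ∈ Algebra.adjoin K s, ∀ b ∈ span K t, a * b ∈ span K t := by
    intro a ha
    induction ha using Algebra.adjoin_induction with
    | mem a ha =>
      intro b hb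
      induction hb using Submodule.span_induction with
      | mem b hb => exact hmul a ha b hb
      | zero => simp
      | add b c _ _ hb hc => rw [mul_add]; exact add_mem hb hc
      | smul c b _ hb => rw [mul_smul_comm]; exact smul_mem _ c hb
    | algebraMap c => intro b hb; rw [← Algebra.smul_def]; exact smul_mem _ c hb
    | add a a' _ _ ha ha' => intro b hb; rw [add_mul]; exact add_mem (ha b hb) (ha' b hb)
    | mul a a' _ _ ha ha' => intro b hb; rw [mul_assoc]; exact ha _ (ha' b hb)
  exact eq_top_iff.2 fun a _ => mul_one a ▸ key a (hs ▸ trivial) 1 ht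

theorem Submodule.exists_dual_smul_eq_of_finrank_eq_one {K V : Type*} [Field K] [AddCommGroup V]
    [Module K V] {P : Submodule K V} (hP : finrank K P = 1) :
    ∃ t ∈ P, ∃ μ : Module.Dual K V, ∀ z ∈ P, μ z • t = z := by
  obtain ⟨⟨t, ht⟩, ht0, hP⟩ := finrank_eq_one_iff'.1 hP
  obtain ⟨μ, hμ⟩ := Projective.exists_dual_eq_one K (Subtype.coe_ne_coe.2 ht0 : t ≠ 0)
  refine ⟨t, ht, μ, fun z hz => ?_⟩
  obtain ⟨c, hc⟩ := hP ⟨z, hz⟩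
  obtain rfl : c • t = z := congrArg Subtype.val hc
  rw [map_smul, hμ, smul_eq_mul, mul_one]

theorem LinearMap.BilinForm.exists_orthonormal_basis {K V : Type*} [Field K] [IsAlgClosed K]
    [Invertible (2 : K)] [AddCommGroup V] [Module K V] [FiniteDimensional K V]
    {B : LinearMap.BilinForm K V} (hs : LinearMap.IsSymm B) (hB : B.SeparatingLeft) :
    ∃ v : Basis (Fin (finrank K V)) K V, ∀ i j, B (v i) (v j) = if i = j then 1 else 0 := by
  obtain ⟨v, hv⟩ := exists_orthogonal_basis hs
  have hdiag := hv.not_isOrtho_basis_self_of_separatingLeft hB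
  choose c hc using fun i => IsAlgClosed.exists_pow_nat_eq (B (v i) (v i))⁻¹ two_pos
  have hc0 (i) : c i ≠ 0 := fun h => by
    have := hc i
    rw [h, zero_pow two_ne_zero, eq_comm, inv_eq_zero] at this
    exact hdiag i this
  refine ⟨v.unitsSMul fun i => Units.mk0 (c i) (hc0 i), fun i j => ?_⟩
  simp only [Basis.unitsSMul_apply, Units.smul_mk0, map_smul, LinearMap.smul_apply, smul_eq_mul]
  obtain rfl | hij := eq_or_ne i j
  · rw [if_pos rfl, ← mul_assoc, ← pow_two, hc, inv_mul_cancel₀ (hdiag i)]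
  · rw [if_neg hij, hv hij, mul_zero, mul_zero]

namespace Qalg

variable {n : ℕ}

noncomputable def S (i : Fin n) : Qalg n := Ideal.Quotient.mk (Iq n) (X i)

theorem S_mul_S_of_ne {i j : Fin n} (h : i ≠ j) : S i * S j = 0 :=
  Ideal.Quotient.eq_zero_iff_mem.2 (Ideal.subset_span (Or.inl ⟨i, j, h, rfl⟩))

theorem S_sq_eq_S_sq (k l : Fin n) : S k ^ 2 = S l ^ 2 :=
  sub_eq_zero.1 <| Ideal.Quotient.eq_zero_iff_mem.2 (Ideal.subset_span (Or.inr ⟨k, l, rfl⟩))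

theorem S_mul_S_sq (hn : 2 ≤ n) (i j : Fin n) : S i * S j ^ 2 = 0 := by
  obtain ⟨l, hl⟩ : ∃ l, l ≠ i := by
    have : Nontrivial (Fin n) := Fin.nontrivial_iff_two_le.2 hn
    exact exists_ne i
  rw [S_sq_eq_S_sq j l, pow_two, ← mul_assoc, S_mul_S_of_ne hl.symm, zero_mul]

theorem adjoin_range_S : Algebra.adjoin ℂ (Set.range (S (n := n))) = ⊤ := by
  have : Set.range (S (n := n)) = Ideal.Quotient.mkₐ ℂ (Iq n) '' Set.range X := by
    rw [← Set.range_comp]; rfl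
  rw [this, Algebra.adjoin_image, MvPolynomial.adjoin_range_X, Algebra.map_top,
    AlgHom.range_eq_top]
  exact Ideal.Quotient.mkₐ_surjective ℂ (Iq n)

-- Indexed by `Fin (n + 2)` so that `finrank_le` below is a cardinality count.
theorem span_range_generators_eq_top (hn : 2 ≤ n) (i₀ : Fin n) :
    span ℂ (Set.range (Fin.cons 1 (Fin.cons (S i₀ ^ 2) S) : Fin (n + 2) → Qalg n)) = ⊤ := by
  rw [Fin.range_cons, Fin.range_cons]
  refine span_eq_top_of_adjoin_eq_top adjoin_range_S (subset_span (Set.mem_insert _ _)) ?_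
  rintro _ ⟨i, rfl⟩ b hb
  obtain rfl | rfl | ⟨j, rfl⟩ := hb
  · exact subset_span (by simp)
  · simp [S_mul_S_sq hn]
  · obtain rfl | hij := eq_or_ne i j
    · rw [← pow_two, S_sq_eq_S_sq i i₀]; exact subset_span (by simp)
    · simp [S_mul_S_of_ne hij]

theorem finiteDimensional (hn : 2 ≤ n) : FiniteDimensional ℂ (Qalg n) :=
  ⟨span_range_generators_eq_top hn ⟨0, by omega⟩ ▸ fg_span (Set.finite_range _)⟩

theorem finrank_le (hn : 2 ≤ n) : finrank ℂ (Qalg n) ≤ n + 2 := by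
  have h := finrank_range_le_card (R := ℂ)
    (Fin.cons 1 (Fin.cons (S ⟨0, by omega⟩ ^ 2) S) : Fin (n + 2) → Qalg n)
  rwa [Set.finrank, span_range_generators_eq_top hn, finrank_top, Fintype.card_fin] at h

theorem nonempty_algEquiv {A : Type*} [CommRing A] [Algebra ℂ A] (hn : 2 ≤ n)
    (hdim : finrank ℂ A = n + 2) (t : A) (x : Fin n → A)
    (hx : ∀ i j, x i * x j = if i = j then t else 0)
    (hspan : span ℂ (insert 1 (insert t (Set.range x))) = ⊤) : Nonempty (Qalg n ≃ₐ[ℂ] A) := by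
  have hker : ∀ p ∈ Iq n, aeval x p = 0 := by
    refine fun p hp => (Ideal.span_le (I := RingHom.ker (aeval x))).2 ?_ hp
    rintro _ (⟨i, j, hij, rfl⟩ | ⟨k, l, rfl⟩) <;> simp [pow_two, *]
  let ψ : Qalg n →ₐ[ℂ] A := Ideal.Quotient.liftₐ (Iq n) (aeval x) hker
  have hψ (i : Fin n) : ψ (S i) = x i := aeval_X x i
  have hsurj : Function.Surjective ψ := by
    refine (AlgHom.range_eq_top ψ).1 (Subalgebra.toSubmodule_injective (top_unique ?_))
    rw [← hspan, span_le]
    rintro _ (rfl | rfl | ⟨i, rfl⟩)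
    · exact one_mem ψ.range
    · exact ⟨S ⟨0, by omega⟩ ^ 2, by simp [hψ, pow_two, hx]⟩
    · exact ⟨S i, hψ i⟩
  have := finiteDimensional hn
  have : FiniteDimensional ℂ A := Module.finite_of_finrank_eq_succ hdim
  have hrank : finrank ℂ (Qalg n) = finrank ℂ A := by
    refine le_antisymm (hdim ▸ finrank_le hn) ?_
    have h := LinearMap.finrank_range_le ψ.toLinearMap
    rwa [LinearMap.range_eq_top.2 hsurj, finrank_top] at h
  exact ⟨AlgEquiv.ofBijective ψ
    ⟨(LinearMap.injective_iff_surjective_of_finrank_eq_finrank (f := ψ.toLinearMap) hrank).2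
      hsurj, hsurj⟩⟩

end Qalg

section LocalAlgebra

variable (k : Type*) {R : Type*} [Field k] [CommRing R] [IsLocalRing R] [Algebra k R]

theorem IsLocalRing.exists_sub_algebraMap_mem_maximalIdeal [IsAlgClosed k]
    [Algebra.IsIntegral k R] (r : R) : ∃ c : k, r - algebraMap k R c ∈ maximalIdeal R := by
  have : Algebra.IsIntegral k (ResidueField R) :=
    .of_surjective (IsScalarTower.toAlgHom k R _) residue_surjective
  obtain ⟨c, hc⟩ := (IsAlgClosed.algebraMap_bijective_of_isIntegral
    (k := k) (K := ResidueField R)).2 (residue R r)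
  refine ⟨c, ?_⟩
  rw [← residue_eq_zero_iff, map_sub, ← hc, IsScalarTower.algebraMap_apply k R (ResidueField R),
    ResidueField.algebraMap_eq, sub_self]

theorem IsLocalRing.isCompl_span_one_maximalIdeal_s11 [IsAlgClosed k] [Algebra.IsIntegral k R] :
    IsCompl (k ∙ (1 : R)) ((maximalIdeal R).restrictScalars k) := by
  constructor
  · refine disjoint_def.2 fun x hx hxm => ?_
    obtain ⟨c, rfl⟩ := mem_span_singleton.1 hx
    by_contra hc
    refine (mem_maximalIdeal _).1 hxm ?_
    rw [← algebraMap_smul R c (1 : R), smul_eq_mul, mul_one]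
    exact (IsUnit.mk0 c fun h => hc (by simp [h])).map (algebraMap k R)
  · refine codisjoint_iff.2 (eq_top_iff.2 fun r _ => mem_sup.2 ?_)
    obtain ⟨c, hc⟩ := exists_sub_algebraMap_mem_maximalIdeal k r
    exact ⟨algebraMap k R c, mem_span_singleton.2 ⟨c, by rw [Algebra.smul_def, mul_one]⟩, _, hc,
      add_sub_cancel _ _⟩

theorem IsLocalRing.maximalIdeal_pow_three_eq_bot [IsNoetherianRing R]
    (hm2 : finrank k ((maximalIdeal R ^ 2).restrictScalars k) = 1) : maximalIdeal R ^ 3 = ⊥ := by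
  have : FiniteDimensional k ((maximalIdeal R ^ 2).restrictScalars k) :=
    Module.finite_of_finrank_eq_succ hm2
  by_contra h
  have hle : (maximalIdeal R ^ 3).restrictScalars k ≤ (maximalIdeal R ^ 2).restrictScalars k :=
    Ideal.pow_le_pow_right (by norm_num)
  have : FiniteDimensional k ((maximalIdeal R ^ 3).restrictScalars k) :=
    Submodule.finiteDimensional_of_le hle
  have hpos : 0 < finrank k ((maximalIdeal R ^ 3).restrictScalars k) := by
    refine Nat.pos_of_ne_zero fun h0 => h ?_
    exact (restrictScalars_eq_bot_iff k _ _).1 (Submodule.finrank_eq_zero.1 h0)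
  have heq : maximalIdeal R ^ 3 = maximalIdeal R ^ 2 :=
    restrictScalars_injective k _ _ (eq_of_le_of_finrank_le hle (by omega))
  have hbot : maximalIdeal R ^ 2 = ⊥ := by
    refine eq_bot_of_le_smul_of_le_jacobson_bot (maximalIdeal R) _ (IsNoetherian.noetherian _)
      ?_ (jacobson_eq_maximalIdeal ⊥ bot_ne_top).ge
    rw [smul_eq_mul, ← pow_succ', heq]
  rw [hbot, restrictScalars_bot, finrank_bot] at hm2
  exact zero_ne_one hm2

theorem IsLocalRing.finrank_maximalIdeal_add_one [IsAlgClosed k] [FiniteDimensional k R] :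
    finrank k ((maximalIdeal R).restrictScalars k) + 1 = finrank k R := by
  rw [← finrank_add_eq_of_isCompl (isCompl_span_one_maximalIdeal_s11 k (R := R)), add_comm,
    finrank_span_singleton one_ne_zero]

theorem IsLocalRing.separatingLeft_restrict_mul {W : Submodule k R}
    (hW : Disjoint ((maximalIdeal R ^ 2).restrictScalars k) W)
    (hsup : (maximalIdeal R ^ 2).restrictScalars k ⊔ W = (maximalIdeal R).restrictScalars k)
    (hm3 : maximalIdeal R ^ 3 = ⊥)
    (hpair : ∀ x ∈ maximalIdeal R, x ∉ maximalIdeal R ^ 2 → ∃ y ∈ maximalIdeal R, x * y ≠ 0)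
    {μ : Module.Dual k R} (hμ : ∀ z ∈ maximalIdeal R ^ 2, μ z = 0 → z = 0) :
    (LinearMap.BilinForm.restrict ((LinearMap.mul k R).compr₂ μ) W).SeparatingLeft := by
  have hWm : W ≤ (maximalIdeal R).restrictScalars k := hsup ▸ le_sup_right
  intro w hw
  have hmul : ∀ y ∈ maximalIdeal R, (w : R) * y = 0 := by
    intro y hy
    have hy' : y ∈ (maximalIdeal R ^ 2).restrictScalars k ⊔ W := by rw [hsup]; exact hy
    obtain ⟨z, hz, w', hw', rfl⟩ := mem_sup.1 hy'
    have hwz : (w : R) * z = 0 := by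
      have := Ideal.mul_mem_mul (hWm w.2) hz
      rwa [← pow_succ', hm3, Ideal.mem_bot] at this
    have hww' : (w : R) * w' ∈ maximalIdeal R ^ 2 := pow_two (maximalIdeal R) ▸
      Ideal.mul_mem_mul (hWm w.2) (hWm hw')
    rw [mul_add, hwz, zero_add, hμ _ hww' (hw ⟨w', hw'⟩)]
  have hw2 : (w : R) ∈ maximalIdeal R ^ 2 := by
    by_contra h
    obtain ⟨y, hy, hne⟩ := hpair _ (hWm w.2) h
    exact hne (hmul y hy)
  exact Subtype.ext (disjoint_def.1 hW _ hw2 w.2)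

theorem IsLocalRing.exists_orthonormal_generators [IsAlgClosed k] [Invertible (2 : k)]
    [FiniteDimensional k R] {n : ℕ} (hdim : finrank k R = n + 2)
    (hm2 : finrank k ((maximalIdeal R ^ 2).restrictScalars k) = 1)
    (hpair : ∀ x ∈ maximalIdeal R, x ∉ maximalIdeal R ^ 2 → ∃ y ∈ maximalIdeal R, x * y ≠ 0) :
    ∃ (t : R) (x : Fin n → R), (∀ i j, x i * x j = if i = j then t else 0) ∧
      span k (insert 1 (insert t (Set.range x))) = ⊤ := by
  have : IsNoetherianRing R := isNoetherian_of_tower k inferInstance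
  obtain ⟨t, -, μ, hμ⟩ := exists_dual_smul_eq_of_finrank_eq_one hm2
  have hμ_mul : ∀ x ∈ maximalIdeal R, ∀ y ∈ maximalIdeal R, μ (x * y) • t = x * y :=
    fun x hx y hy => hμ _ (pow_two (maximalIdeal R) ▸ Ideal.mul_mem_mul hx hy :)
  obtain ⟨W, hW, hsup⟩ := IsModularLattice.exists_disjoint_and_sup_eq
    (show (maximalIdeal R ^ 2).restrictScalars k ≤ (maximalIdeal R).restrictScalars k from
      Ideal.pow_le_self two_ne_zero)
  have hWm : W ≤ (maximalIdeal R).restrictScalars k := hsup ▸ le_sup_right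
  have hsep := separatingLeft_restrict_mul k hW hsup (maximalIdeal_pow_three_eq_bot k hm2) hpair
    fun z hz hz0 => by rw [← hμ z hz, hz0, zero_smul]
  have hfinrank : finrank k W = n := by
    have h := finrank_sup_add_finrank_inf_eq ((maximalIdeal R ^ 2).restrictScalars k) W
    rw [hsup, disjoint_iff.1 hW, finrank_bot, hm2] at h
    have := finrank_maximalIdeal_add_one k (R := R)
    omega
  obtain ⟨v, hv⟩ := LinearMap.BilinForm.exists_orthonormal_basis
    ⟨fun w w' => by simp [mul_comm]⟩ hsep
  let b := v.reindex (finCongr hfinrank)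
  refine ⟨t, fun i => b i, fun i j => ?_, ?_⟩
  · have h : μ ((b i : R) * b j) = if i = j then 1 else 0 := by
      simpa [b] using hv ((finCongr hfinrank).symm i) ((finCongr hfinrank).symm j)
    rw [← hμ_mul _ (hWm (b i).2) _ (hWm (b j).2), h]
    split_ifs <;> simp
  · have hspan_x : span k (Set.range fun i => (b i : R)) = W := by
      change span k (Set.range (W.subtype ∘ b)) = W
      rw [Set.range_comp, ← map_span, b.span_eq, Submodule.map_top, range_subtype]
    rw [span_insert, span_insert, hspan_x, eq_top_iff,
      ← (isCompl_span_one_maximalIdeal_s11 k).sup_eq_top, ← hsup]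
    exact sup_le_sup_left (sup_le_sup_right (fun z hz => mem_span_singleton.2 ⟨μ z, hμ z hz⟩) _) _

end LocalAlgebra

theorem nonempty_algEquiv_Qalg (n : ℕ) (hn : 2 ≤ n) (R : Type) [CommRing R] [IsLocalRing R]
    [Algebra ℂ R] (hdim : finrank ℂ R = n + 2)
    (hm2 : finrank ℂ ((maximalIdeal R ^ 2).restrictScalars ℂ) = 1)
    (hpair : ∀ x ∈ maximalIdeal R, x ∉ maximalIdeal R ^ 2 → ∃ y ∈ maximalIdeal R, x * y ≠ 0) :
    Nonempty (R ≃ₐ[ℂ] Qalg n) := by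
  have : FiniteDimensional ℂ R := Module.finite_of_finrank_eq_succ hdim
  obtain ⟨t, x, hx, hspan⟩ := exists_orthonormal_generators ℂ hdim hm2 hpair
  exact (Qalg.nonempty_algEquiv hn hdim t x hx hspan).map AlgEquiv.symm

/-- Let `n ≥ 2` and let `R` be a commutative local ℂ-algebra with `dim_ℂ R = n + 2`,
`dim_ℂ 𝔪² = 1`, and such that every element of `𝔪 \ 𝔪²` multiplies nontrivially with some
element of `𝔪`. Then `R ≅ ℂ[S₁,…,Sₙ]/(SᵢSⱼ (i ≠ j), Sₖ² − Sₗ²)`; in particular, any two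
such algebras are isomorphic. -/
theorem stmt11 (n : ℕ) (hn : 2 ≤ n) (R : Type) [CommRing R] [IsLocalRing R] [Algebra ℂ R]
    (hdim : Module.finrank ℂ R = n + 2)
    (hm2 : Module.finrank ℂ
      (Submodule.restrictScalars ℂ ((IsLocalRing.maximalIdeal R) ^ 2)) = 1)
    (hpair : ∀ x ∈ IsLocalRing.maximalIdeal R, x ∉ (IsLocalRing.maximalIdeal R) ^ 2 →
      ∃ y ∈ IsLocalRing.maximalIdeal R, x * y ≠ 0) :
    Nonempty (R ≃ₐ[ℂ] Qalg n) ∧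
    ∀ (R' : Type) [CommRing R'] [IsLocalRing R'] [Algebra ℂ R'],
      Module.finrank ℂ R' = n + 2 →
      Module.finrank ℂ
        (Submodule.restrictScalars ℂ ((IsLocalRing.maximalIdeal R') ^ 2)) = 1 →
      (∀ x ∈ IsLocalRing.maximalIdeal R', x ∉ (IsLocalRing.maximalIdeal R') ^ 2 →
        ∃ y ∈ IsLocalRing.maximalIdeal R', x * y ≠ 0) →
      Nonempty (R ≃ₐ[ℂ] R') := by
  obtain ⟨e⟩ := nonempty_algEquiv_Qalg n hn R hdim hm2 hpair
  refine ⟨⟨e⟩, fun R' _ _ _ hdim' hm2' hpair' => ?_⟩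
  obtain ⟨e'⟩ := nonempty_algEquiv_Qalg n hn R' hdim' hm2' hpair'
  exact ⟨e.trans e'.symm⟩
end

section
/- Let X be an irreducible topological space, let G be a commutative subgroup of the group of homeomorphisms of X, and let x₀ ∈ X be a point whose orbit O = {g·x₀ : g ∈ G} is open in X. If f is a homeomorphism of X commuting with every element of G, then there exists g₀ ∈ G such that f(x) = g₀(x) for every x ∈ O. -/
/-- Let `X` be an irreducible topological space and `G` a commutative subgroup of the group
of homeomorphisms of `X` (a set of homeomorphisms containing the identity, closed under
composition and inverses, whose elements pairwise commute). Let `x₀ ∈ X` be a point whose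
`G`-orbit `O` is open. If a homeomorphism `f` of `X` commutes with every element of `G`,
then `f` coincides on `O` with some element `g₀ ∈ G`. -/
theorem stmt14 (X : Type) [TopologicalSpace X] [IrreducibleSpace X]
    (G : Set (X ≃ₜ X))
    (hone : Homeomorph.refl X ∈ G)
    (hmul : ∀ g ∈ G, ∀ h ∈ G, g.trans h ∈ G)
    (hinv : ∀ g ∈ G, g.symm ∈ G)
    (hcomm : ∀ g ∈ G, ∀ h ∈ G, g.trans h = h.trans g)
    (x₀ : X) (O : Set X) (hO : O = {x : X | ∃ g ∈ G, g x₀ = x}) (hopen : IsOpen O)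
    (f : X ≃ₜ X) (hf : ∀ g ∈ G, f.trans g = g.trans f) :
    ∃ g₀ ∈ G, ∀ x ∈ O, f x = g₀ x := by
  have hx₀ : x₀ ∈ O := by
    rw [hO]; exact ⟨Homeomorph.refl X, hone, rfl⟩
  have hfO : IsOpen (f '' O) := f.isOpenMap O hopen
  obtain ⟨y, hy1, hy2⟩ : (O ∩ f '' O).Nonempty :=
    nonempty_preirreducible_inter hopen hfO ⟨x₀, hx₀⟩ ⟨f x₀, x₀, hx₀, rfl⟩
  rw [hO] at hy1
  obtain ⟨h, hhG, hh⟩ := hy1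
  obtain ⟨z, hz, hfz⟩ := hy2
  rw [hO] at hz
  obtain ⟨g, hgG, hg⟩ := hz
  -- f (g x₀) = h x₀
  have key : f x₀ = (h.trans g.symm) x₀ := by
    have hc : g (f x₀) = f (g x₀) := by
      have := hf g hgG
      have := congrArg (fun e => (e : X ≃ₜ X) x₀) this
      simpa [Homeomorph.trans_apply] using this
    have : g (f x₀) = h x₀ := by rw [hc, hg, hfz, hh]
    simp [Homeomorph.trans_apply, ← this]
  refine ⟨h.trans g.symm, hmul h hhG g.symm (hinv g hgG), ?_⟩
  intro x hx
  rw [hO] at hx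
  obtain ⟨k, hkG, hk⟩ := hx
  have hc1 : f (k x₀) = k (f x₀) := by
    have := congrArg (fun e => (e : X ≃ₜ X) x₀) (hf k hkG)
    simpa [Homeomorph.trans_apply] using this.symm
  have hc2 : (h.trans g.symm) (k x₀) = k ((h.trans g.symm) x₀) := by
    have := congrArg (fun e => (e : X ≃ₜ X) x₀)
      (hcomm k hkG (h.trans g.symm) (hmul h hhG g.symm (hinv g hgG)))
    simpa [Homeomorph.trans_apply] using this
  rw [← hk, hc1, key, hc2]
end

section
/- For n ≥ 1 define, for a = (a₁,…,aₙ) ∈ ℂⁿ, the (n+2)×(n+2) complex matrix ρ(a) whose entries are: ρ(a)₍₀,₀₎ = 1, ρ(a)₍ᵢ,₀₎ = aᵢ and ρ(a)₍ᵢ,ᵢ₎ = 1 for 1 ≤ i ≤ n, ρ(a)₍ₙ₊₁,₀₎ = (1/2)·Σᵢ aᵢ², ρ(a)₍ₙ₊₁,ᵢ₎ = aᵢ for 1 ≤ i ≤ n, ρ(a)₍ₙ₊₁,ₙ₊₁₎ = 1, and all other entries 0. Then ρ(a+b) = ρ(a)·ρ(b) for all a, b ∈ ℂⁿ, ρ is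 injective, and every ρ(a) preserves the quadratic form q(y) = 2·y₀·yₙ₊₁ − Σᵢ₌₁ⁿ yᵢ² on ℂ^{n+2}, i.e. q(ρ(a)·y) = q(y) for all y ∈ ℂ^{n+2}. -/
/-- Auxiliary: for `i : Fin (n+2)` with `1 ≤ i ≤ n`, the value `aᵢ`; otherwise `0`. -/
noncomputable def av (n : ℕ) (a : Fin n → ℂ) (i : Fin (n + 2)) : ℂ :=
  if h : 1 ≤ (i : ℕ) ∧ (i : ℕ) ≤ n then a ⟨(i : ℕ) - 1, by omega⟩ else 0

/-- The matrix `ρ(a)`: `ρ(a)₍₀,₀₎ = 1`, `ρ(a)₍ᵢ,₀₎ = aᵢ` and `ρ(a)₍ᵢ,ᵢ₎ = 1` for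
`1 ≤ i ≤ n`, `ρ(a)₍ₙ₊₁,₀₎ = ½·Σ aᵢ²`, `ρ(a)₍ₙ₊₁,ᵢ₎ = aᵢ` for `1 ≤ i ≤ n`,
`ρ(a)₍ₙ₊₁,ₙ₊₁₎ = 1`, all other entries `0`. -/
noncomputable def rho (n : ℕ) (a : Fin n → ℂ) : Matrix (Fin (n + 2)) (Fin (n + 2)) ℂ :=
  Matrix.of fun i j =>
    if i = j then 1
    else if (j : ℕ) = 0 ∧ (i : ℕ) ≠ 0 ∧ (i : ℕ) ≠ n + 1 then av n a i
    else if (j : ℕ) = 0 ∧ (i : ℕ) = n + 1 then (1 / 2) * ∑ k, a k ^ 2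
    else if (i : ℕ) = n + 1 ∧ (j : ℕ) ≠ 0 ∧ (j : ℕ) ≠ n + 1 then av n a j
    else 0

/-- The quadratic form `q(y) = 2·y₀·yₙ₊₁ − Σᵢ₌₁ⁿ yᵢ²` on `ℂ^{n+2}`. -/
noncomputable def quadForm (n : ℕ) (y : Fin (n + 2) → ℂ) : ℂ :=
  2 * y 0 * y (Fin.last (n + 1)) - ∑ i : Fin n, y i.succ.castSucc ^ 2

/-! Split `y ∈ ℂ^{n+2}` as `(y₀, u, yₙ₊₁)` with `u ∈ ℂⁿ`. Then `ρ(a)` acts by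
`(y₀, u, yₙ₊₁) ↦ (y₀, u + y₀ a, yₙ₊₁ + a ⬝ u + ½ (a ⬝ a) y₀)`
and `q(y) = 2 y₀ yₙ₊₁ - u ⬝ u`, so the homomorphism property and the invariance of `q` both
reduce to bilinearity of the dot product; injectivity is read off the column `0`. -/

open Matrix

section interior
variable {α : Type*} {n : ℕ}

def Fin.interior (y : Fin (n + 2) → α) : Fin n → α := fun k => y k.succ.castSucc

@[simp] lemma Fin.interior_apply (y : Fin (n + 2) → α) (k : Fin n) :
    Fin.interior y k = y k.succ.castSucc := rfl

lemma Fin.sum_univ_eq_zero_add_interior_add_last [AddCommMonoid α] (y : Fin (n + 2) → α) :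
    ∑ i, y i = y 0 + ∑ k, Fin.interior y k + y (Fin.last (n + 1)) := by
  rw [Fin.sum_univ_castSucc, Fin.sum_univ_succ]
  rfl

lemma Fin.funext_zero_interior_last {y z : Fin (n + 2) → α} (h0 : y 0 = z 0)
    (hint : Fin.interior y = Fin.interior z) (hlast : y (Fin.last (n + 1)) = z (Fin.last (n + 1))) :
    y = z := by
  funext i
  rcases Fin.eq_castSucc_or_eq_last i with ⟨j, rfl⟩ | rfl
  · rcases Fin.eq_zero_or_eq_succ j with rfl | ⟨k, rfl⟩
    · exact h0
    · exact congrFun hint k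
  · exact hlast

end interior

lemma quadForm_eq (n : ℕ) (y : Fin (n + 2) → ℂ) :
    quadForm n y = 2 * y 0 * y (Fin.last (n + 1)) - Fin.interior y ⬝ᵥ Fin.interior y := by
  simp only [quadForm, dotProduct, Fin.interior_apply, sq]

lemma av_castSucc_succ {n : ℕ} (a : Fin n → ℂ) (k : Fin n) :
    av n a k.castSucc.succ = a k := by
  simp [av]

namespace rho

section entries

variable {n : ℕ} (a : Fin n → ℂ)

lemma apply_zero_zero : rho n a 0 0 = 1 := by simp [rho]

lemma apply_zero_interior (k : Fin n) : rho n a 0 k.succ.castSucc = 0 := by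
  simp [rho, Fin.ext_iff, -Fin.val_eq_zero_iff]

lemma apply_zero_last : rho n a 0 (Fin.last (n + 1)) = 0 := by
  simp [rho, Fin.ext_iff, -Fin.val_eq_zero_iff]

lemma apply_interior_zero (k : Fin n) : rho n a k.succ.castSucc 0 = a k := by
  simp [rho, Fin.ext_iff, -Fin.val_eq_zero_iff, k.isLt.ne, av_castSucc_succ]

lemma apply_interior_interior (k m : Fin n) :
    rho n a k.succ.castSucc m.succ.castSucc = if k = m then 1 else 0 := by
  simp [rho, Fin.ext_iff, -Fin.val_eq_zero_iff, k.isLt.ne]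

lemma apply_interior_last (k : Fin n) : rho n a k.succ.castSucc (Fin.last (n + 1)) = 0 := by
  simp [rho, Fin.ext_iff, -Fin.val_eq_zero_iff, k.isLt.ne]

lemma apply_last_zero : rho n a (Fin.last (n + 1)) 0 = 1 / 2 * ∑ k, a k ^ 2 := by
  simp [rho, Fin.ext_iff, -Fin.val_eq_zero_iff]

lemma apply_last_interior (k : Fin n) : rho n a (Fin.last (n + 1)) k.succ.castSucc = a k := by
  simp [rho, Fin.ext_iff, -Fin.val_eq_zero_iff, k.isLt.ne, k.isLt.ne', av_castSucc_succ]

lemma apply_last_last : rho n a (Fin.last (n + 1)) (Fin.last (n + 1)) = 1 := by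
  simp [rho]

end entries

section mulVec

variable {n : ℕ} (a : Fin n → ℂ) (y : Fin (n + 2) → ℂ)

lemma mulVec_zero : (rho n a *ᵥ y) 0 = y 0 := by
  simp only [mulVec, dotProduct, Fin.sum_univ_eq_zero_add_interior_add_last, Fin.interior_apply,
    apply_zero_zero, apply_zero_interior, apply_zero_last]
  simp

lemma interior_mulVec : Fin.interior (rho n a *ᵥ y) = y 0 • a + Fin.interior y := by
  funext k
  simp only [Fin.interior_apply, mulVec, dotProduct, Fin.sum_univ_eq_zero_add_interior_add_last,
    apply_interior_zero, apply_interior_interior, apply_interior_last]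
  simp [mul_comm]

lemma mulVec_last : (rho n a *ᵥ y) (Fin.last (n + 1)) =
    1 / 2 * (a ⬝ᵥ a) * y 0 + a ⬝ᵥ Fin.interior y + y (Fin.last (n + 1)) := by
  simp only [mulVec, dotProduct, Fin.sum_univ_eq_zero_add_interior_add_last, Fin.interior_apply,
    apply_last_zero, apply_last_interior, apply_last_last, sq]
  ring

end mulVec

variable {n : ℕ}

lemma add_mulVec (a b : Fin n → ℂ) (y : Fin (n + 2) → ℂ) :
    rho n (a + b) *ᵥ y = rho n a *ᵥ (rho n b *ᵥ y) := by
  apply Fin.funext_zero_interior_last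
  · simp only [mulVec_zero]
  · simp only [interior_mulVec, mulVec_zero, smul_add]
    abel
  · simp only [mulVec_last, mulVec_zero, interior_mulVec, add_dotProduct, dotProduct_add,
      dotProduct_smul, dotProduct_comm b a, smul_eq_mul]
    ring

lemma map_add (a b : Fin n → ℂ) : rho n (a + b) = rho n a * rho n b :=
  ext_iff_mulVec.2 fun y => by rw [add_mulVec, mulVec_mulVec]

lemma injective : Function.Injective (rho n) := fun a b hab =>
  funext fun k => by
    simpa only [apply_interior_zero] using congrFun (congrFun hab k.succ.castSucc) 0

lemma quadForm_mulVec (a : Fin n → ℂ) (y : Fin (n + 2) → ℂ) :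
    quadForm n (rho n a *ᵥ y) = quadForm n y := by
  simp only [quadForm_eq, mulVec_zero, mulVec_last, interior_mulVec, add_dotProduct,
    dotProduct_add, smul_dotProduct, dotProduct_smul, dotProduct_comm (Fin.interior y) a,
    smul_eq_mul]
  ring

end rho

theorem stmt15_general (n : ℕ) :
    (∀ a b : Fin n → ℂ, rho n (a + b) = rho n a * rho n b) ∧
    Function.Injective (rho n) ∧
    (∀ (a : Fin n → ℂ) (y : Fin (n + 2) → ℂ),
      quadForm n ((rho n a).mulVec y) = quadForm n y) :=
  ⟨rho.map_add, rho.injective, rho.quadForm_mulVec⟩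

/-- `ρ` is an injective homomorphism from `(ℂⁿ, +)` into the orthogonal group of the
quadratic form `q(y) = 2·y₀·yₙ₊₁ − Σ yᵢ²`. -/
theorem stmt15 (n : ℕ) (hn : 1 ≤ n) :
    (∀ a b : Fin n → ℂ, rho n (a + b) = rho n a * rho n b) ∧
    Function.Injective (rho n) ∧
    (∀ (a : Fin n → ℂ) (y : Fin (n + 2) → ℂ),
      quadForm n ((rho n a).mulVec y) = quadForm n y) :=
  stmt15_general n
end

section
/- Let R be a finite-dimensional commutative associative unital ℂ-algebra generated as a unital ℂ-algebra by elements s₁, …, sₙ all of which are nilpotent. Then the ℂ-linear span of the set {exp(a₁s₁ + ⋯ + aₙsₙ) : (a₁,…,aₙ) ∈ ℂⁿ} is all of R. -/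
/-!
The exponentials `exp x`, `x` in the span `L` of the `sᵢ`, form a multiplicative monoid since
`exp (x + y) = exp x * exp y`; hence their linear span is a subalgebra. It contains every `x ∈ L`:
`t ↦ exp (t • x) = ∑ tᵏ • xᵏ / k!` is a polynomial map in `t`, and a subspace containing all values
of a vector-valued polynomial over an infinite field contains its coefficients. So the span
contains the algebra generated by the `sᵢ`, which is all of `R`.
-/

open Finset

open Polynomial in
theorem Submodule.mem_of_forall_sum_pow_smul_mem {K M : Type*} [Field K] [Infinite K]
    [AddCommGroup M] [Module K M] (S : Submodule K M) (v : ℕ → M) {N : ℕ}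
    (h : ∀ t : K, ∑ j ∈ range N, t ^ j • v j ∈ S) {k : ℕ} (hk : k < N) : v k ∈ S := by
  rw [← Submodule.Quotient.mk_eq_zero]
  refine (Module.forall_dual_apply_eq_zero_iff K _).mp fun φ => ?_
  let p : K[X] := ∑ j ∈ range N, C (φ (S.mkQ (v j))) * X ^ j
  have hp : p = 0 := Polynomial.funext fun t => by
    have : φ (S.mkQ (∑ j ∈ range N, t ^ j • v j)) = 0 := by
      rw [mkQ_apply, (Submodule.Quotient.mk_eq_zero S).mpr (h t), map_zero]
    simp only [map_sum, map_smul, smul_eq_mul] at this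
    simpa only [p, eval_finsetSum, eval_mul, eval_C, eval_pow, eval_X, eval_zero, mul_comm]
      using this
  simpa [p, finsetSum_coeff, coeff_C_mul_X_pow, hk] using congrArg (coeff · k) hp

namespace IsNilpotent

variable {K R : Type*} [Field K] [CommRing R] [Algebra K R] [Module ℚ R]

theorem exp_eq_sum_inv_factorial_smul [CharZero K] {x : R} {N : ℕ} (hx : x ^ N = 0) :
    exp x = ∑ k ∈ range N, (k.factorial : K)⁻¹ • x ^ k := by
  rw [exp_eq_sum hx]
  refine sum_congr rfl fun k _ => ?_
  rw [← Rat.cast_id ((k.factorial : ℚ)⁻¹), ratCast_smul_eq ℚ K]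
  push_cast
  rfl

theorem exp_smul_eq_sum_pow_smul {x : R} {N : ℕ} (hx : x ^ N = 0) (t : K) :
    exp (t • x) = ∑ k ∈ range N, t ^ k • ((k.factorial : ℚ)⁻¹ • x ^ k) := by
  rw [exp_eq_sum (k := N) (by rw [smul_pow, hx, smul_zero])]
  refine sum_congr rfl fun k _ => ?_
  rw [smul_pow, smul_comm]

theorem mem_span_range_exp_smul [Infinite K] {x : R} (hx : IsNilpotent x) :
    x ∈ Submodule.span K (Set.range fun t : K => exp (t • x)) := by
  obtain ⟨N, hN⟩ := hx
  have hN2 : x ^ (N + 2) = 0 := pow_eq_zero_of_le (by omega) hN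
  have := Submodule.mem_of_forall_sum_pow_smul_mem
    (Submodule.span K (Set.range fun t : K => exp (t • x)))
    (fun k => (k.factorial : ℚ)⁻¹ • x ^ k)
    (fun t => Submodule.subset_span ⟨t, exp_smul_eq_sum_pow_smul hN2 t⟩)
    (show 1 < N + 2 by omega)
  simpa using this

def expSubmonoid (L : Submodule K R) (hL : ∀ x ∈ L, IsNilpotent x) : Submonoid R where
  carrier := exp '' L
  one_mem' := ⟨0, L.zero_mem, exp_zero⟩
  mul_mem' := by
    rintro _ _ ⟨x, hx, rfl⟩ ⟨y, hy, rfl⟩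
    exact ⟨x + y, L.add_mem hx hy, exp_add_of_commute (Commute.all x y) (hL x hx) (hL y hy)⟩

theorem adjoin_le_span_exp_image [Infinite K] (L : Submodule K R) (hL : ∀ x ∈ L, IsNilpotent x) :
    Subalgebra.toSubmodule (Algebra.adjoin K (L : Set R)) ≤ Submodule.span K (exp '' L) := by
  have hspan : Submodule.span K (exp '' L) =
      Subalgebra.toSubmodule (Algebra.adjoin K (expSubmonoid L hL : Set R)) := by
    rw [Algebra.adjoin_eq_span, Submonoid.closure_eq]
    rfl
  rw [hspan]
  refine Subalgebra.toSubmodule.monotone (Algebra.adjoin_le fun x hx => ?_)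
  rw [SetLike.mem_coe, ← Subalgebra.mem_toSubmodule, ← hspan]
  refine Submodule.span_mono ?_ (mem_span_range_exp_smul (hL x hx))
  rintro _ ⟨t, rfl⟩
  exact ⟨t • x, L.smul_mem t hx, rfl⟩

end IsNilpotent

theorem stmt19_general (R : Type) [CommRing R] [Algebra ℂ R]
    (n : ℕ) (s : Fin n → R) (hnil : ∀ i, IsNilpotent (s i))
    (hgen : Algebra.adjoin ℂ (Set.range s) = ⊤) :
    Submodule.span ℂ {u : R | ∃ a : Fin n → ℂ, ∃ N : ℕ,
      (∑ i, a i • s i) ^ N = 0 ∧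
      u = ∑ k ∈ range N, (k.factorial : ℂ)⁻¹ • (∑ i, a i • s i) ^ k} = ⊤ := by
  -- `IsNilpotent.exp` is stated over `ℚ`; a `ℚ`-module structure is unique, so any one will do.
  let _ : Module ℚ R := Module.compHom R (algebraMap ℚ ℂ)
  set L := Submodule.span ℂ (Set.range s)
  have hL_le : L ≤ (nilradical R).restrictScalars ℂ :=
    Submodule.span_le.mpr (Set.range_subset_iff.mpr hnil)
  have hL : ∀ x ∈ L, IsNilpotent x := fun x hx => mem_nilradical.mp (hL_le hx)
  rw [eq_top_iff]
  calc ⊤ = Subalgebra.toSubmodule (Algebra.adjoin ℂ (L : Set R)) := by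
        rw [Algebra.adjoin_span, hgen, Algebra.top_toSubmodule]
    _ ≤ Submodule.span ℂ (IsNilpotent.exp '' L) :=
        IsNilpotent.adjoin_le_span_exp_image L hL
    _ ≤ _ := Submodule.span_mono ?_
  rintro _ ⟨x, hx, rfl⟩
  obtain ⟨a, rfl⟩ := (Submodule.mem_span_range_iff_exists_fun ℂ).mp hx
  obtain ⟨N, hN⟩ := hL _ hx
  exact ⟨a, N, hN, IsNilpotent.exp_eq_sum_inv_factorial_smul hN⟩

/-- Let `R` be a finite-dimensional commutative ℂ-algebra generated by nilpotent elements
`s₁, …, sₙ`. Then the ℂ-linear span of all elements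
`exp (a₁s₁ + ⋯ + aₙsₙ) = Σ_{k < N} (a₁s₁ + ⋯ + aₙsₙ)ᵏ/k!` (where `N` is any truncation
point beyond the nilpotency degree, so the finite sum is the full exponential) is `R`. -/
theorem stmt19 (R : Type) [CommRing R] [Algebra ℂ R] [FiniteDimensional ℂ R]
    (n : ℕ) (s : Fin n → R) (hnil : ∀ i, IsNilpotent (s i))
    (hgen : Algebra.adjoin ℂ (Set.range s) = ⊤) :
    Submodule.span ℂ {u : R | ∃ a : Fin n → ℂ, ∃ N : ℕ,
      (∑ i, a i • s i) ^ N = 0 ∧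
      u = ∑ k ∈ range N, (k.factorial : ℂ)⁻¹ • (∑ i, a i • s i) ^ k} = ⊤ :=
  stmt19_general R n s hnil hgen
end
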